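/- arXiv:2005.04918 — 9 statements merged into one kernel-verified Lean document; each statement's English description precedes it below -/
import Mathlib

section
/- The function Φ(t) = log det(Σ_{i=1}^n e^{t_i} x_i ⊗ x_i) is convex on R^n, provided x_1,...,x_n span R^d. -/
/-!
Expanding the determinant multilinearly in its rows and symmetrizing over permutations (a form of
Cauchy–Binet) gives
`d! · det (∑ i, e^{t i} x i ⊗ x i) = ∑_{r : Fin d → Fin n} det (x ∘ r)² · exp (∑ a, t (r a))`.
So the determinant is a nonnegative combination of exponentials of linear functions of `t`, and
the logarithm of such a sum is convex by Hölder's inequality with exponents `1/a`, `1/b`.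
-/

open Matrix Real Finset

theorem Real.sum_rpow_mul_rpow_le_of_add_eq_one {ι : Type*} (s : Finset ι) {f g : ι → ℝ}
    (hf : ∀ i ∈ s, 0 ≤ f i) (hg : ∀ i ∈ s, 0 ≤ g i) {a b : ℝ} (ha : 0 < a) (hb : 0 < b)
    (hab : a + b = 1) :
    ∑ i ∈ s, f i ^ a * g i ^ b ≤ (∑ i ∈ s, f i) ^ a * (∑ i ∈ s, g i) ^ b := by
  have h := inner_le_Lp_mul_Lq_of_nonneg s (HolderConjugate.inv_inv ha hb hab)
    (fun i hi => rpow_nonneg (hf i hi) a) (fun i hi => rpow_nonneg (hg i hi) b)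
  simp only [one_div, inv_inv] at h
  convert h using 3 <;> refine sum_congr rfl fun i hi => ?_
  · rw [rpow_rpow_inv (hf i hi) ha.ne']
  · rw [rpow_rpow_inv (hg i hi) hb.ne']

theorem Real.mul_exp_add_eq_rpow_mul_rpow {w a b : ℝ} (hw : 0 ≤ w) (hab : a + b = 1) (x y : ℝ) :
    w * exp (a * x + b * y) = (w * exp x) ^ a * (w * exp y) ^ b := by
  rw [mul_rpow hw (exp_pos x).le, mul_rpow hw (exp_pos y).le, ← exp_mul, ← exp_mul,
    mul_mul_mul_comm, ← rpow_add' hw (by rw [hab]; exact one_ne_zero), hab, rpow_one,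
    ← exp_add, mul_comm x, mul_comm y]

theorem convexOn_log_sum_mul_exp {ι E : Type*} [AddCommGroup E] [Module ℝ E] {S : Set E}
    (hS : Convex ℝ S) (s : Finset ι) {w : ι → ℝ} (hw : ∀ i ∈ s, 0 ≤ w i) {φ : ι → E → ℝ}
    (hφ : ∀ i ∈ s, ConvexOn ℝ S (φ i)) :
    ConvexOn ℝ S fun t => log (∑ i ∈ s, w i * exp (φ i t)) := by
  by_cases hzero : ∀ i ∈ s, w i = 0
  · have hP : ∀ t, ∑ i ∈ s, w i * exp (φ i t) = 0 := fun t =>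
      sum_eq_zero fun i hi => by rw [hzero i hi, zero_mul]
    simpa only [hP, log_zero] using convexOn_const (0 : ℝ) hS
  push Not at hzero
  obtain ⟨i₀, hi₀, hwi₀⟩ := hzero
  set P : E → ℝ := fun t => ∑ i ∈ s, w i * exp (φ i t)
  have hP : ∀ t, 0 < P t := fun t => sum_pos' (fun i hi => mul_nonneg (hw i hi) (exp_pos _).le)
    ⟨i₀, hi₀, mul_pos ((hw i₀ hi₀).lt_of_ne' hwi₀) (exp_pos _)⟩
  refine convexOn_iff_forall_pos.2 ⟨hS, fun t ht u hu a b ha hb hab => ?_⟩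
  have hmul : P (a • t + b • u) ≤ P t ^ a * P u ^ b := calc
    P (a • t + b • u) ≤ ∑ i ∈ s, w i * exp (a * φ i t + b * φ i u) :=
      sum_le_sum fun i hi => mul_le_mul_of_nonneg_left
        (exp_le_exp.2 ((hφ i hi).2 ht hu ha.le hb.le hab)) (hw i hi)
    _ = ∑ i ∈ s, (w i * exp (φ i t)) ^ a * (w i * exp (φ i u)) ^ b :=
      sum_congr rfl fun i hi => Real.mul_exp_add_eq_rpow_mul_rpow (hw i hi) hab _ _
    _ ≤ P t ^ a * P u ^ b := Real.sum_rpow_mul_rpow_le_of_add_eq_one s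
      (fun i hi => mul_nonneg (hw i hi) (exp_pos _).le)
      (fun i hi => mul_nonneg (hw i hi) (exp_pos _).le) ha hb hab
  calc log (P (a • t + b • u)) ≤ log (P t ^ a * P u ^ b) := log_le_log (hP _) hmul
    _ = a * log (P t) + b * log (P u) := by
      rw [log_mul (rpow_pos_of_pos (hP t) a).ne' (rpow_pos_of_pos (hP u) b).ne',
        log_rpow (hP t), log_rpow (hP u)]

section DetExpansion

variable {R ι m : Type*} [CommRing R] [Fintype ι] [Fintype m] [DecidableEq m]

theorem Matrix.det_sum_smul_vecMulVec (c : ι → R) (x y : ι → m → R) :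
    (∑ i, c i • vecMulVec (x i) (y i)).det
      = ∑ r : m → ι, (∏ a, c (r a) * x (r a) a) * (of fun a => y (r a)).det := by
  have hrows : (∑ i, c i • vecMulVec (x i) (y i)) = fun a => ∑ i, (c i * x i a) • y i := by
    ext a b
    simp [sum_apply, vecMulVec_apply, mul_assoc]
  rw [hrows]
  exact (detRowAlternating.toMultilinearMap.map_sum _).trans
    (sum_congr rfl fun r _ => detRowAlternating.toMultilinearMap.map_smul_univ _ _)

theorem Matrix.card_perm_mul_det_sum_smul_vecMulVec_self (c : ι → R) (x : ι → m → R) :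
    (Fintype.card (Equiv.Perm m) : R) * (∑ i, c i • vecMulVec (x i) (x i)).det
      = ∑ r : m → ι, (∏ a, c (r a)) * (of fun a => x (r a)).det ^ 2 := by
  set F : (m → ι) → R := fun r => (∏ a, c (r a) * x (r a) a) * (of fun a => x (r a)).det
  have hperm (r : m → ι) (σ : Equiv.Perm m) : F (r ∘ σ)
      = (∏ a, c (r a)) * (of fun a => x (r a)).det * (Equiv.Perm.sign σ * ∏ a, x (r (σ a)) a) := by
    have hdet : (of fun a => x (r (σ a))).det = Equiv.Perm.sign σ * (of fun a => x (r a)).det :=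
      det_permute σ (of fun a => x (r a))
    simp only [F, Function.comp_apply, prod_mul_distrib, hdet, Equiv.prod_comp σ (fun a => c (r a))]
    ring
  calc (Fintype.card (Equiv.Perm m) : R) * (∑ i, c i • vecMulVec (x i) (x i)).det
      = ∑ σ : Equiv.Perm m, ∑ r, F (r ∘ σ) := by
        rw [det_sum_smul_vecMulVec, ← Finset.card_univ, ← nsmul_eq_mul, ← sum_const]
        exact sum_congr rfl fun σ _ =>
          (Fintype.sum_equiv (σ.symm.arrowCongr (Equiv.refl ι)) _ _ fun r => rfl).symm
    _ = ∑ r, ∑ σ : Equiv.Perm m, F (r ∘ σ) := sum_comm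
    _ = ∑ r : m → ι, (∏ a, c (r a)) * (of fun a => x (r a)).det ^ 2 := by
        refine sum_congr rfl fun r _ => ?_
        have hdet : ∑ σ : Equiv.Perm m, (Equiv.Perm.sign σ : R) * ∏ a, x (r (σ a)) a
            = (of fun a => x (r a)).det := by
          simp only [det_apply', of_apply]
        simp only [hperm, ← mul_sum, hdet, sq, mul_assoc]

end DetExpansion

theorem stmt3_general {d n : ℕ} (x : Fin n → Fin d → ℝ) :
    ConvexOn ℝ (Set.univ : Set (Fin n → ℝ))
      (fun t => Real.log (∑ i, Real.exp (t i) • Matrix.vecMulVec (x i) (x i)).det) := by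
  set N : ℝ := (Fintype.card (Equiv.Perm (Fin d)) : ℝ)
  have hN : N ≠ 0 := Nat.cast_ne_zero.2 Fintype.card_ne_zero
  have hdet (t : Fin n → ℝ) : (∑ i, exp (t i) • vecMulVec (x i) (x i)).det
      = ∑ r : Fin d → Fin n, (of fun a => x (r a)).det ^ 2 / N * exp (∑ a, t (r a)) := by
    rw [← mul_div_cancel_left₀ (∑ i, exp (t i) • vecMulVec (x i) (x i)).det hN,
      card_perm_mul_det_sum_smul_vecMulVec_self, sum_div]
    exact sum_congr rfl fun r _ => by rw [exp_sum]; ring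
  simp only [hdet]
  refine convexOn_log_sum_mul_exp convex_univ univ (fun r _ => by positivity) fun r _ => ?_
  refine ⟨convex_univ, fun t _ u _ a b _ _ _ => le_of_eq ?_⟩
  simp only [Pi.add_apply, Pi.smul_apply, smul_eq_mul, sum_add_distrib, mul_sum]

/-- The function `Φ(t) = log det (∑ i, e^{t i} • x i ⊗ x i)` is convex on `ℝ^n`,
provided the `x i` span `ℝ^d`. -/
theorem stmt3 {d n : ℕ} (x : Fin n → Fin d → ℝ)
    (hspan : Submodule.span ℝ (Set.range x) = ⊤) :
    ConvexOn ℝ (Set.univ : Set (Fin n → ℝ))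
      (fun t => Real.log (∑ i, Real.exp (t i) • Matrix.vecMulVec (x i) (x i)).det) :=
  stmt3_general x
end

section
/- If c ∈ R^n can be written as c = Σ_S λ_S 1_S, a convex combination over d-subsets S with Δ_S > 0 (λ_S ≥ 0, Σ λ_S = 1), then for all t ∈ R^n, log det(Σ_i e^{t_i} x_i ⊗ x_i) ≥ ⟨c,t⟩ − Σ_S λ_S log(λ_S/Δ_S); hence Φ*(c) ≤ Σ_S λ_S log(λ_S/Δ_S) < ∞. -/
/-!
By Cauchy–Binet, `det (∑ i, e^{t i} • x i ⊗ x i) = ∑_{|S| = d} e^{∑_{i ∈ S} t i} Δ_S`, a sum of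
nonnegative terms. Dropping the terms with `λ_S = 0` and applying Jensen's inequality for the
concave logarithm with the weights `λ_S` gives
`log det ≥ ∑_S λ_S log (e^{∑_{i ∈ S} t i} Δ_S / λ_S) = ⟨c, t⟩ - ∑_S λ_S log (λ_S / Δ_S)`,
because `∑_S λ_S 1_S = c`.
-/

open Finset Matrix Real

@[to_additive]
theorem Finset.prod_orderEmbOfFin {ι M : Type*} [LinearOrder ι] [CommMonoid M] {d : ℕ}
    (S : Finset ι) (hS : S.card = d) (f : ι → M) :
    ∏ k, f (S.orderEmbOfFin hS k) = ∏ i ∈ S, f i := by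
  conv_rhs => rw [← S.map_orderEmbOfFin_univ hS, prod_map]
  rfl

theorem Finset.sum_filter_injective_eq_sum_sum_perm {ι M : Type*} [LinearOrder ι] [Fintype ι]
    [AddCommMonoid M] {d : ℕ} (g : (Fin d → ι) → M) :
    ∑ f : Fin d → ι with Function.Injective f, g f =
      ∑ S : {S : Finset ι // S.card = d}, ∑ σ : Equiv.Perm (Fin d),
        g (S.1.orderEmbOfFin S.2 ∘ σ) := by
  rw [Finset.sum_subtype (p := Function.Injective) _ (by simp), ← Fintype.sum_prod_type']
  let e : {S : Finset ι // S.card = d} × Equiv.Perm (Fin d) → {f : Fin d → ι // f.Injective} :=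
    fun p => ⟨p.1.1.orderEmbOfFin p.1.2 ∘ p.2,
      (p.1.1.orderEmbOfFin p.1.2).injective.comp p.2.injective⟩
  refine (Fintype.sum_bijective e ⟨?_, ?_⟩ _ _ fun _ => rfl).symm
  · rintro ⟨⟨S, hS⟩, σ⟩ ⟨⟨S', hS'⟩, σ'⟩ h
    have hf : S.orderEmbOfFin hS ∘ σ = S'.orderEmbOfFin hS' ∘ σ' := congrArg Subtype.val h
    obtain rfl : S = S' := by
      simpa [Set.range_comp, σ.surjective.range_eq, σ'.surjective.range_eq]
        using congrArg Set.range hf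
    simpa using Equiv.ext fun a => (S.orderEmbOfFin hS).injective (congrFun hf a)
  · rintro ⟨f, hf⟩
    have hS : (univ.image f).card = d := by simp [card_image_of_injective _ hf]
    have hmem : ∀ a, f a ∈ univ.image f := fun a => mem_image_of_mem f (mem_univ a)
    let σ : Fin d → Fin d := fun a => ((univ.image f).orderIsoOfFin hS).symm ⟨f a, hmem a⟩
    have hσ : σ.Injective := fun a b hab => hf (by simpa [σ] using hab)
    refine ⟨(⟨univ.image f, hS⟩, Equiv.ofBijective σ hσ.bijective_of_finite), Subtype.ext ?_⟩
    funext a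
    simp [e, σ, ← coe_orderIsoOfFin_apply]

theorem Finset.sum_sum_filter_mem_mul {ι : Type*} [Fintype ι] [DecidableEq ι]
    (P : Finset (Finset ι)) (lam : Finset ι → ℝ) (t : ι → ℝ) :
    ∑ i, (∑ S ∈ P with i ∈ S, lam S) * t i = ∑ S ∈ P, lam S * ∑ i ∈ S, t i := by
  simp_rw [sum_mul, sum_filter, mul_sum]
  rw [sum_comm]
  refine sum_congr rfl fun S _ => ?_
  rw [← sum_filter, filter_mem_eq_inter, univ_inter]

namespace Matrix

section CommRing

variable {R : Type*} [CommRing R]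

theorem det_mul_eq_sum_prod_mul_det_submatrix {m ι : Type*} [Fintype m] [DecidableEq m]
    [Fintype ι] (A : Matrix m ι R) (B : Matrix ι m R) :
    (A * B).det = ∑ f : m → ι, (∏ a, A a (f a)) * (B.submatrix f id).det := by
  have hrows : A * B = of fun a => ∑ i, A a i • B i := by
    ext a b
    simp [mul_apply, Finset.sum_apply]
  rw [hrows]
  exact (detRowAlternating (R := R) (n := m)).toMultilinearMap.map_sum _ |>.trans
    (Finset.sum_congr rfl fun f _ => (detRowAlternating (R := R)).map_smul_univ _ _)

/-- The Cauchy–Binet formula. -/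
theorem det_mul_eq_sum_det_submatrix_mul_det_submatrix {ι : Type*} [LinearOrder ι] [Fintype ι]
    {d : ℕ} (A : Matrix (Fin d) ι R) (B : Matrix ι (Fin d) R) :
    (A * B).det = ∑ S : {S : Finset ι // S.card = d},
      (A.submatrix id (S.1.orderEmbOfFin S.2)).det *
        (B.submatrix (S.1.orderEmbOfFin S.2) id).det := by
  rw [det_mul_eq_sum_prod_mul_det_submatrix, ← Finset.sum_filter_of_ne (p := Function.Injective),
    Finset.sum_filter_injective_eq_sum_sum_perm]
  · refine Fintype.sum_congr _ _ fun S => ?_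
    rw [← det_transpose (A.submatrix _ _), det_apply, Finset.sum_mul]
    refine Fintype.sum_congr _ _ fun σ => ?_
    rw [show B.submatrix (S.1.orderEmbOfFin S.2 ∘ σ) id
      = (B.submatrix (S.1.orderEmbOfFin S.2) id).submatrix σ id from rfl, det_permute]
    simp only [Function.comp_apply, transpose_apply, submatrix_apply, id_eq, Units.smul_def,
      zsmul_eq_mul]
    ring
  · intro f _ hne
    by_contra hf
    obtain ⟨a, b, hab, hne'⟩ := Function.not_injective_iff.mp hf
    exact hne (by rw [det_zero_of_row_eq hne' (congrArg B hab), mul_zero])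

theorem sum_vecMulVec_self_eq_transpose_mul_self {ι : Type*} [LinearOrder ι] {d : ℕ}
    (x : ι → Fin d → R) (S : Finset ι) (hS : S.card = d) :
    ∑ i ∈ S, vecMulVec (x i) (x i) =
      ((of x).submatrix (S.orderEmbOfFin hS) id)ᵀ * (of x).submatrix (S.orderEmbOfFin hS) id := by
  ext a b
  simp only [sum_apply, vecMulVec_apply, mul_apply, transpose_apply, submatrix_apply, of_apply, id]
  exact (S.sum_orderEmbOfFin hS _).symm

theorem det_sum_smul_vecMulVec_self {ι : Type*} [LinearOrder ι] [Fintype ι] {d : ℕ}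
    (x : ι → Fin d → R) (w : ι → R) :
    (∑ i, w i • vecMulVec (x i) (x i)).det =
      ∑ S ∈ univ.powersetCard d, (∏ i ∈ S, w i) * (∑ i ∈ S, vecMulVec (x i) (x i)).det := by
  have hgram : ∑ i, w i • vecMulVec (x i) (x i) = ((of x)ᵀ * diagonal w) * of x := by
    ext a b
    simp [sum_apply, mul_apply, vecMulVec_apply, diagonal_apply, mul_left_comm, mul_comm]
  rw [hgram, det_mul_eq_sum_det_submatrix_mul_det_submatrix,
    Finset.sum_subtype (univ.powersetCard d) (p := fun S : Finset ι => S.card = d) (by simp)]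
  refine Fintype.sum_congr _ _ fun S => ?_
  have hA : ((of x)ᵀ * diagonal w).submatrix id (S.1.orderEmbOfFin S.2) =
      ((of x).submatrix (S.1.orderEmbOfFin S.2) id)ᵀ * diagonal (w ∘ S.1.orderEmbOfFin S.2) := by
    ext a b
    simp [mul_diagonal]
  rw [sum_vecMulVec_self_eq_transpose_mul_self x S.1 S.2, hA, det_mul, det_mul, det_transpose,
    det_diagonal, Function.comp_def, S.1.prod_orderEmbOfFin]
  ring

end CommRing

theorem det_sum_vecMulVec_self_nonneg {ι n : Type*} [Fintype n] [DecidableEq n]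
    (x : ι → n → ℝ) (s : Finset ι) : 0 ≤ (∑ i ∈ s, vecMulVec (x i) (x i)).det :=
  (posSemidef_sum s fun i _ => by simpa using posSemidef_vecMulVec_self_star (x i)).det_nonneg

end Matrix

theorem Real.sum_mul_log_div_le_log_sum {α : Type*} (s : Finset α) {p a : α → ℝ}
    (hp : ∀ i ∈ s, 0 < p i) (hp1 : ∑ i ∈ s, p i = 1) (ha : ∀ i ∈ s, 0 < a i) :
    ∑ i ∈ s, p i * log (a i / p i) ≤ log (∑ i ∈ s, a i) := by
  have hjensen := strictConcaveOn_log_Ioi.concaveOn.le_map_sum (fun i hi => (hp i hi).le) hp1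
    (fun i hi => Set.mem_Ioi.mpr (div_pos (ha i hi) (hp i hi)))
  simp only [smul_eq_mul] at hjensen
  rwa [sum_congr rfl fun i hi => mul_div_cancel₀ (a i) (hp i hi).ne'] at hjensen

theorem stmt8_general {d n : ℕ} (x : Fin n → Fin d → ℝ)
    (lam : Finset (Fin n) → ℝ) (c : Fin n → ℝ)
    (hlam0 : ∀ S, 0 ≤ lam S)
    (hsupp : ∀ S, lam S ≠ 0 →
      S.card = d ∧ 0 < (∑ i ∈ S, Matrix.vecMulVec (x i) (x i)).det)
    (hsum1 : ∑ S ∈ Finset.univ.powersetCard d, lam S = 1)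
    (hc : ∀ i, c i =
      ∑ S ∈ Finset.filter (fun S => i ∈ S) (Finset.univ.powersetCard d), lam S) :
    ∀ t : Fin n → ℝ,
      (∑ i, c i * t i) -
          (∑ S ∈ Finset.filter (fun S => 0 < lam S) (Finset.univ.powersetCard d),
            lam S * Real.log (lam S / (∑ i ∈ S, Matrix.vecMulVec (x i) (x i)).det))
        ≤ Real.log (∑ i, Real.exp (t i) • Matrix.vecMulVec (x i) (x i)).det := by
  intro t
  set P : Finset (Finset (Fin n)) := univ.powersetCard d
  set T := P.filter fun S => 0 < lam S
  set Δ := fun S : Finset (Fin n) => (∑ i ∈ S, vecMulVec (x i) (x i)).det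
  set a := fun S => exp (∑ i ∈ S, t i) * Δ S
  have hlam : ∀ S ∈ T, 0 < lam S := fun S hS => (mem_filter.mp hS).2
  have hΔ : ∀ S ∈ T, 0 < Δ S := fun S hS => (hsupp S (hlam S hS).ne').2
  have ha : ∀ S ∈ T, 0 < a S := fun S hS => mul_pos (exp_pos _) (hΔ S hS)
  have hsum_T : ∀ f : Finset (Fin n) → ℝ, (∀ S, lam S = 0 → f S = 0) →
      ∑ S ∈ T, f S = ∑ S ∈ P, f S := fun f hf =>
    sum_filter_of_ne fun S _ hS => (hlam0 S).lt_of_ne' fun h => hS (hf S h)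
  have hT1 : ∑ S ∈ T, lam S = 1 := (hsum_T lam fun _ => id).trans hsum1
  have hct : ∑ i, c i * t i = ∑ S ∈ T, lam S * ∑ i ∈ S, t i := by
    simp_rw [hc, sum_sum_filter_mem_mul]
    exact (hsum_T _ fun S h => by rw [h, zero_mul]).symm
  have hdet : (∑ i, exp (t i) • vecMulVec (x i) (x i)).det = ∑ S ∈ P, a S := by
    simp [a, Δ, P, det_sum_smul_vecMulVec_self, exp_sum]
  calc ∑ i, c i * t i - ∑ S ∈ T, lam S * log (lam S / Δ S)
      = ∑ S ∈ T, lam S * log (a S / lam S) := by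
        rw [hct, ← sum_sub_distrib]
        refine sum_congr rfl fun S hS => ?_
        rw [log_div (ha S hS).ne' (hlam S hS).ne', log_mul (exp_pos _).ne' (hΔ S hS).ne', log_exp,
          log_div (hlam S hS).ne' (hΔ S hS).ne']
        ring
    _ ≤ log (∑ S ∈ T, a S) := sum_mul_log_div_le_log_sum T hlam hT1 ha
    _ ≤ log (∑ S ∈ P, a S) := by
      have hT : T.Nonempty := nonempty_of_sum_ne_zero (hT1 ▸ one_ne_zero)
      refine log_le_log (sum_pos ha hT) (sum_le_sum_of_subset_of_nonneg (filter_subset _ _) ?_)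
      exact fun S _ _ => mul_nonneg (exp_pos _).le (det_sum_vecMulVec_self_nonneg x S)
    _ = log (∑ i, exp (t i) • vecMulVec (x i) (x i)).det := by rw [hdet]

/-- If `c = ∑_S λ_S 1_S` is a convex combination over `d`-subsets `S` with `Δ_S > 0`,
then for all `t`, `log det (∑ i, e^{t i} • x i ⊗ x i) ≥ ⟨c, t⟩ - ∑_S λ_S log (λ_S / Δ_S)`;
hence `Φ*(c)` is bounded by the entropy sum (terms with `λ_S = 0` are omitted). -/
theorem stmt8 {d n : ℕ} (x : Fin n → Fin d → ℝ)
    (hspan : Submodule.span ℝ (Set.range x) = ⊤)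
    (lam : Finset (Fin n) → ℝ) (c : Fin n → ℝ)
    (hlam0 : ∀ S, 0 ≤ lam S)
    (hsupp : ∀ S, lam S ≠ 0 →
      S.card = d ∧ 0 < (∑ i ∈ S, Matrix.vecMulVec (x i) (x i)).det)
    (hsum1 : ∑ S ∈ Finset.univ.powersetCard d, lam S = 1)
    (hc : ∀ i, c i =
      ∑ S ∈ Finset.filter (fun S => i ∈ S) (Finset.univ.powersetCard d), lam S) :
    ∀ t : Fin n → ℝ,
      (∑ i, c i * t i) -
          (∑ S ∈ Finset.filter (fun S => 0 < lam S) (Finset.univ.powersetCard d),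
            lam S * Real.log (lam S / (∑ i ∈ S, Matrix.vecMulVec (x i) (x i)).det))
        ≤ Real.log (∑ i, Real.exp (t i) • Matrix.vecMulVec (x i) (x i)).det :=
  stmt8_general x lam c hlam0 hsupp hsum1 hc
end

section
/- Let x_1,...,x_n be a set of n vectors in R^d in c-isotropic position (Σ_i c_i x_i ⊗ x_i = I_d with all c_i > 0), and suppose R^d = F_1 ⊕ F_2 is a direct sum such that every x_i lies in F_1 ∪ F_2. Then F_1 and F_2 are orthogonal subspaces. -/
open Matrix

/-!
Split the isotropic decomposition `I = ∑ cᵢ xᵢ xᵢᵀ` as `I = A + B` according to whether `xᵢ ∈ F₁`.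
Then `A` and `B` are complementary projections with ranges in `F₁` and `F₂`; as `F₁ ⊓ F₂ = ⊥`,
`B` kills `F₁` and fixes `F₂`. Since `B` is symmetric, `⟪u, v⟫ = ⟪u, B v⟫ = ⟪B u, v⟫ = 0`
for `u ∈ F₁`, `v ∈ F₂`.
-/

section

variable {ι m R : Type*} [CommSemiring R]

theorem isSymm_sum_smul_vecMulVec_self (s : Finset ι) (c : ι → R) (x : ι → m → R) :
    (∑ i ∈ s, c i • vecMulVec (x i) (x i)).IsSymm := by
  simp only [IsSymm, transpose_sum, transpose_smul, transpose_vecMulVec]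

variable [Fintype m]

theorem sum_smul_vecMulVec_mulVec_mem {F : Submodule R (m → R)} (s : Finset ι) (c : ι → R)
    (x y : ι → m → R) (hx : ∀ i ∈ s, x i ∈ F) (w : m → R) :
    (∑ i ∈ s, c i • vecMulVec (x i) (y i)) *ᵥ w ∈ F := by
  rw [sum_mulVec]
  refine Submodule.sum_mem _ fun i hi => ?_
  rw [smul_mulVec, vecMulVec_mulVec, op_smul_eq_smul]
  exact F.smul_mem _ (F.smul_mem _ (hx i hi))

end

section

variable {m R : Type*} [Fintype m] [DecidableEq m] [CommRing R]
  {F G : Submodule R (m → R)} {A B : Matrix m m R}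

theorem mulVec_eq_zero_of_add_eq_one (hFG : F ⊓ G = ⊥) (hAB : A + B = 1)
    (hA : ∀ w, A *ᵥ w ∈ F) (hB : ∀ w, B *ᵥ w ∈ G) {u : m → R} (hu : u ∈ F) : B *ᵥ u = 0 := by
  have hBu : B *ᵥ u = u - A *ᵥ u := by
    rw [eq_sub_iff_add_eq, add_comm, ← add_mulVec, hAB, one_mulVec]
  have hmem : B *ᵥ u ∈ F ⊓ G := ⟨hBu ▸ F.sub_mem hu (hA u), hB u⟩
  rwa [hFG, Submodule.mem_bot] at hmem

theorem dotProduct_eq_zero_of_add_eq_one (hFG : F ⊓ G = ⊥) (hAB : A + B = 1)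
    (hA : ∀ w, A *ᵥ w ∈ F) (hB : ∀ w, B *ᵥ w ∈ G) (hBsymm : B.IsSymm)
    {u v : m → R} (hu : u ∈ F) (hv : v ∈ G) : u ⬝ᵥ v = 0 := by
  have hBu : B *ᵥ u = 0 := mulVec_eq_zero_of_add_eq_one hFG hAB hA hB hu
  have hAv : A *ᵥ v = 0 :=
    mulVec_eq_zero_of_add_eq_one (inf_comm F G ▸ hFG) (add_comm A B ▸ hAB) hB hA hv
  calc u ⬝ᵥ v = u ⬝ᵥ (A *ᵥ v + B *ᵥ v) := by rw [← add_mulVec, hAB, one_mulVec]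
    _ = (B *ᵥ u) ⬝ᵥ v := by
      rw [hAv, zero_add, dotProduct_mulVec, ← mulVec_transpose, hBsymm.eq]
    _ = 0 := by rw [hBu, zero_dotProduct]

end

theorem stmt9_general {d n : ℕ} (x : Fin n → Fin d → ℝ) (c : Fin n → ℝ)
    (F₁ F₂ : Submodule ℝ (Fin d → ℝ))
    (hdisj : F₁ ⊓ F₂ = ⊥)
    (hx : ∀ i, x i ∈ F₁ ∨ x i ∈ F₂)
    (hiso : ∑ i, c i • Matrix.vecMulVec (x i) (x i) = (1 : Matrix (Fin d) (Fin d) ℝ)) :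
    ∀ u ∈ F₁, ∀ v ∈ F₂, u ⬝ᵥ v = 0 := by
  classical
  intro u hu v hv
  refine dotProduct_eq_zero_of_add_eq_one hdisj
    (A := ∑ i ∈ {i | x i ∈ F₁}, c i • vecMulVec (x i) (x i))
    (B := ∑ i ∈ {i | x i ∉ F₁}, c i • vecMulVec (x i) (x i)) ?_ ?_ ?_ ?_ hu hv
  · rw [Finset.sum_filter_add_sum_filter_not, hiso]
  · exact sum_smul_vecMulVec_mulVec_mem _ _ _ _ fun i hi => (Finset.mem_filter.mp hi).2
  · exact sum_smul_vecMulVec_mulVec_mem _ _ _ _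
      fun i hi => (hx i).resolve_left (Finset.mem_filter.mp hi).2
  · exact isSymm_sum_smul_vecMulVec_self _ _ _

/-- If `x 1, ..., x n` are in `c`-isotropic position with positive weights, and
`ℝ^d = F₁ ⊕ F₂` is a direct sum such that every `x i` lies in `F₁ ∪ F₂`, then `F₁`
and `F₂` are orthogonal. -/
theorem stmt9 {d n : ℕ} (x : Fin n → Fin d → ℝ) (c : Fin n → ℝ)
    (hc : ∀ i, 0 < c i)
    (F₁ F₂ : Submodule ℝ (Fin d → ℝ))
    (hdisj : F₁ ⊓ F₂ = ⊥) (hsup : F₁ ⊔ F₂ = ⊤)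
    (hx : ∀ i, x i ∈ F₁ ∨ x i ∈ F₂)
    (hiso : ∑ i, c i • Matrix.vecMulVec (x i) (x i) = (1 : Matrix (Fin d) (Fin d) ℝ)) :
    ∀ u ∈ F₁, ∀ v ∈ F₂, u ⬝ᵥ v = 0 :=
  stmt9_general x c F₁ F₂ hdisj hx hiso
end

section
/- Let z_1,...,z_n be unit vectors in R^d with Σ_i c_i z_i ⊗ z_i = I_d, where c_i > 0. Then Φ*(c) = Σ_{i=1}^n c_i log c_i, where Φ(t) = log det(Σ_i e^{t_i} z_i ⊗ z_i), and the supremum defining Φ*(c) is attained at t with t_i = log c_i. -/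
/-!
Expanding the determinant multilinearly in its rows and symmetrising over permutations gives a
Cauchy–Binet formula `det (∑ cᵢ wᵢ zᵢ zᵢᵀ) = ∑_r p_r ∏_j w_{r j}` over maps `r : Fin d → Fin n`,
with nonnegative weights `p_r ∝ ∏_j c_{r j} · det (z_{r 1}, …, z_{r d})²`. Taking `w = 1` shows
that `p` is a probability distribution when `∑ cᵢ zᵢ zᵢᵀ = 1`, and differentiating at `w = 1 + u s`
(the derivative of `det (1 + u S)` at `0` is `tr S`) shows that the `p`-mean of `∑_j s_{r j}` is
`∑ cᵢ sᵢ |zᵢ|²`. Jensen's inequality for `exp` then gives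
`exp (∑ cᵢ sᵢ) ≤ det (∑ cᵢ e^{sᵢ} zᵢ zᵢᵀ)` for unit vectors, which at `sᵢ = tᵢ - log cᵢ` is the
key inequality; at `t = log c` the matrix is `1`.
-/

open Matrix Polynomial

namespace Matrix

variable {ι m R : Type*} [Fintype m] [DecidableEq m]

theorem hasDerivAt_det_one_add_smul {𝕜 : Type*} [NontriviallyNormedField 𝕜] (M : Matrix m m 𝕜) :
    HasDerivAt (fun u : 𝕜 => det (1 + u • M)) (trace M) 0 := by
  have h := (det (1 + (X : 𝕜[X]) • M.map C)).hasDerivAt 0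
  rw [derivative_det_one_add_X_smul] at h
  convert h using 1
  ext u
  rw [← coe_evalRingHom, RingHom.map_det]
  congr 1
  ext i j
  by_cases hij : i = j <;> simp [hij, mul_comm u]

theorem det_sum_smul_vecMulVec_self_s10 [Fintype ι] [CommRing R] (a : ι → R) (z : ι → m → R) :
    det (∑ i, a i • vecMulVec (z i) (z i)) =
      ∑ r : m → ι, (∏ j, a (r j) * z (r j) j) * det ((of z).submatrix r id) := by
  have hrows : ∑ i, a i • vecMulVec (z i) (z i) = of fun j => ∑ i, (a i * z i j) • z i := by
    ext j k
    simp [sum_apply, vecMulVec_apply, Finset.sum_apply, mul_assoc]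
  rw [hrows]
  exact (detRowAlternating.toMultilinearMap.map_sum _).trans <|
    Finset.sum_congr rfl fun r _ => detRowAlternating.toMultilinearMap.map_smul_univ _ _

theorem sum_perm_prod_mul_det_submatrix [CommRing R] (a : ι → R) (z : ι → m → R) (r : m → ι) :
    ∑ σ : Equiv.Perm m, (∏ j, a (r (σ j)) * z (r (σ j)) j) * det ((of z).submatrix (r ∘ σ) id) =
      (∏ j, a (r j)) * det ((of z).submatrix r id) ^ 2 := by
  have hperm (σ : Equiv.Perm m) : det ((of z).submatrix (r ∘ σ) id) =
      Equiv.Perm.sign σ * det ((of z).submatrix r id) := by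
    rw [← det_permute σ]; rfl
  calc _ = ∑ σ : Equiv.Perm m, (∏ j, a (r j)) *
        ((Equiv.Perm.sign σ * ∏ j, z (r (σ j)) j) * det ((of z).submatrix r id)) := by
        refine Finset.sum_congr rfl fun σ _ => ?_
        rw [hperm, Finset.prod_mul_distrib, Equiv.prod_comp σ (fun j => a (r j))]
        ring
    _ = (∏ j, a (r j)) * det ((of z).submatrix r id) ^ 2 := by
        rw [← Finset.mul_sum, ← Finset.sum_mul, det_apply' ((of z).submatrix r id)]
        simp [sq]

theorem det_sum_smul_vecMulVec_self_mul_factorial [Fintype ι] [CommRing R] (a : ι → R)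
    (z : ι → m → R) :
    det (∑ i, a i • vecMulVec (z i) (z i)) * (Fintype.card m).factorial =
      ∑ r : m → ι, (∏ j, a (r j)) * det ((of z).submatrix r id) ^ 2 := by
  set T : (m → ι) → R := fun r => (∏ j, a (r j) * z (r j) j) * det ((of z).submatrix r id)
  calc _ = ∑ σ : Equiv.Perm m, ∑ r, T r := by
        rw [det_sum_smul_vecMulVec_self_s10, Finset.sum_const, Finset.card_univ, Fintype.card_perm,
          nsmul_eq_mul, mul_comm]
    _ = ∑ σ : Equiv.Perm m, ∑ r, T (r ∘ σ) := Finset.sum_congr rfl fun σ _ =>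
        (Equiv.sum_comp (Equiv.arrowCongr σ.symm (Equiv.refl ι)) T).symm
    _ = ∑ r, ∑ σ : Equiv.Perm m, T (r ∘ σ) := Finset.sum_comm
    _ = _ := Finset.sum_congr rfl fun r _ => sum_perm_prod_mul_det_submatrix a z r

noncomputable def binetWeight (c : ι → ℝ) (z : ι → m → ℝ) (r : m → ι) : ℝ :=
  (∏ j, c (r j)) * det ((of z).submatrix r id) ^ 2 / (Fintype.card m).factorial

variable {c : ι → ℝ} {z : ι → m → ℝ}

theorem binetWeight_nonneg (hc : ∀ i, 0 ≤ c i) (r : m → ι) : 0 ≤ binetWeight c z r := by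
  have := Finset.prod_nonneg fun j (_ : j ∈ Finset.univ) => hc (r j)
  unfold binetWeight
  positivity

variable [Fintype ι]

theorem det_sum_mul_smul_vecMulVec_self_eq_sum_binetWeight (c w : ι → ℝ) (z : ι → m → ℝ) :
    det (∑ i, (c i * w i) • vecMulVec (z i) (z i)) = ∑ r, binetWeight c z r * ∏ j, w (r j) := by
  refine eq_div_of_mul_eq (by positivity) (det_sum_smul_vecMulVec_self_mul_factorial _ z)
    |>.trans ?_
  rw [Finset.sum_div]
  refine Finset.sum_congr rfl fun r _ => ?_
  rw [binetWeight, Finset.prod_mul_distrib]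
  ring

theorem sum_binetWeight (hiso : ∑ i, c i • vecMulVec (z i) (z i) = 1) :
    ∑ r, binetWeight c z r = 1 := by
  simpa [hiso] using (det_sum_mul_smul_vecMulVec_self_eq_sum_binetWeight c 1 z).symm

theorem sum_binetWeight_mul_sum (hiso : ∑ i, c i • vecMulVec (z i) (z i) = 1) (s : ι → ℝ) :
    ∑ r, binetWeight c z r * ∑ j, s (r j) = ∑ i, c i * s i * (z i ⬝ᵥ z i) := by
  set S := ∑ i, (c i * s i) • vecMulVec (z i) (z i)
  have hdet (u : ℝ) : det (1 + u • S) = ∑ r, binetWeight c z r * ∏ j, (1 + u * s (r j)) := by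
    rw [← det_sum_mul_smul_vecMulVec_self_eq_sum_binetWeight c (fun i => 1 + u * s i) z]
    simp only [S, ← hiso, Finset.smul_sum, smul_smul, ← Finset.sum_add_distrib, ← add_smul]
    congr! 3
    ring
  have hS : HasDerivAt (fun u : ℝ => det (1 + u • S)) (trace S) 0 :=
    hasDerivAt_det_one_add_smul S
  have hsum : HasDerivAt (fun u : ℝ => det (1 + u • S))
      (∑ r, binetWeight c z r * ∑ j, s (r j)) 0 := by
    simp only [hdet]
    refine HasDerivAt.fun_sum fun r _ => HasDerivAt.const_mul _ ?_
    simpa using HasDerivAt.fun_finsetProd (u := Finset.univ) fun j _ =>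
      ((hasDerivAt_id (0 : ℝ)).mul_const (s (r j))).const_add 1
  rw [hsum.unique hS, trace_sum]
  simp [trace_vecMulVec, mul_assoc]

theorem exp_sum_le_det_sum_exp_smul_vecMulVec (hc : ∀ i, 0 ≤ c i)
    (hiso : ∑ i, c i • vecMulVec (z i) (z i) = 1) (s : ι → ℝ) :
    Real.exp (∑ i, c i * s i * (z i ⬝ᵥ z i)) ≤
      det (∑ i, (c i * Real.exp (s i)) • vecMulVec (z i) (z i)) := by
  rw [det_sum_mul_smul_vecMulVec_self_eq_sum_binetWeight, ← sum_binetWeight_mul_sum hiso]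
  simpa [← Real.exp_sum] using convexOn_exp.map_sum_le (fun r _ => binetWeight_nonneg hc r)
    (sum_binetWeight hiso) (fun r _ => Set.mem_univ (∑ j, s (r j)))

end Matrix

open Real

/-- If unit vectors `z i` satisfy `∑ i, c i • z i ⊗ z i = I_d` with `c i > 0`, then
`Φ*(c) = ∑ i, c i log (c i)` where `Φ(t) = log det (∑ i, e^{t i} • z i ⊗ z i)`, and
the supremum defining `Φ*(c)` is attained at `t` with `t i = log (c i)`. -/
theorem stmt10 {d n : ℕ} (z : Fin n → Fin d → ℝ) (c : Fin n → ℝ)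
    (hc : ∀ i, 0 < c i) (hunit : ∀ i, z i ⬝ᵥ z i = 1)
    (hiso : ∑ i, c i • Matrix.vecMulVec (z i) (z i) = (1 : Matrix (Fin d) (Fin d) ℝ)) :
    ((∑ i, c i * Real.log (c i)) -
        Real.log (∑ i, Real.exp (Real.log (c i)) • Matrix.vecMulVec (z i) (z i)).det
      = ∑ i, c i * Real.log (c i)) ∧
    ∀ t : Fin n → ℝ,
      (∑ i, c i * t i) -
          Real.log (∑ i, Real.exp (t i) • Matrix.vecMulVec (z i) (z i)).det
        ≤ ∑ i, c i * Real.log (c i) := by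
  have hexp_log (i : Fin n) : exp (log (c i)) = c i := exp_log (hc i)
  refine ⟨by simp [hexp_log, hiso], fun t => ?_⟩
  have key := exp_sum_le_det_sum_exp_smul_vecMulVec (fun i => (hc i).le) hiso
    (fun i => t i - log (c i))
  have hweight (i : Fin n) : c i * exp (t i - log (c i)) = exp (t i) := by
    rw [exp_sub, hexp_log, mul_div_cancel₀ _ (hc i).ne']
  simp only [hunit, mul_one, hweight] at key
  rw [← le_log_iff_exp_le ((exp_pos _).trans_le key)] at key
  simp only [mul_sub, Finset.sum_sub_distrib] at key
  linarith
end

section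
/- Let z_1,...,z_n be unit vectors in R^d with Σ_i c_i z_i ⊗ z_i = I_d. Then for each i, Σ_{S: |S|=d, i∈S} λ_S = c_i, where λ_S = det(Σ_{j∈S} c_j z_j ⊗ z_j); moreover Σ_{|S|=d} λ_S = 1. -/
open Matrix Finset

section Aux

variable {d n : ℕ} (z : Fin n → Fin d → ℝ) (c : Fin n → ℝ)

private noncomputable def gAux (r : Fin d → Fin n) : ℝ :=
  (∏ i, c (r i) * z (r i) i) • Matrix.detRowAlternating (fun i => z (r i))

private lemma expandAux (T : Finset (Fin n)) :
    (∑ j ∈ T, c j • Matrix.vecMulVec (z j) (z j)).det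
      = ∑ r ∈ Fintype.piFinset (fun _ : Fin d => T), gAux z c r := by
  have hM : (∑ j ∈ T, c j • Matrix.vecMulVec (z j) (z j))
      = Matrix.of (fun i => ∑ j ∈ T, (c j * z j i) • z j) := by
    ext i k
    simp [Matrix.sum_apply, Matrix.vecMulVec_apply, mul_assoc]
  rw [hM]
  have h1 : (Matrix.of (fun i => ∑ j ∈ T, (c j * z j i) • z j)).det
      = Matrix.detRowAlternating (fun i => ∑ j ∈ T, (c j * z j i) • z j) := rfl
  rw [h1]
  have h2 := Matrix.detRowAlternating.toMultilinearMap.map_sum_finset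
      (fun i j => (c j * z j i) • z j) (fun _ : Fin d => T)
  refine h2.trans (Finset.sum_congr rfl fun r _ => ?_)
  exact Matrix.detRowAlternating.toMultilinearMap.map_smul_univ
    (fun i => c (r i) * z (r i) i) (fun i => z (r i))

private lemma gAux_eq_zero {r : Fin d → Fin n} (h : ¬ Function.Injective r) :
    gAux z c r = 0 := by
  rw [Function.not_injective_iff] at h
  obtain ⟨a, b, hab, hne⟩ := h
  have : Matrix.detRowAlternating (fun i => z (r i)) = 0 :=
    Matrix.detRowAlternating.map_eq_zero_of_eq _ (by rw [hab]) hne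
  simp [gAux, this]

private lemma cauchyBinet (T : Finset (Fin n)) :
    (∑ j ∈ T, c j • Matrix.vecMulVec (z j) (z j)).det
      = ∑ S ∈ T.powersetCard d, (∑ j ∈ S, c j • Matrix.vecMulVec (z j) (z j)).det := by
  classical
  have key : ∀ (U : Finset (Fin n)),
      (∑ j ∈ U, c j • Matrix.vecMulVec (z j) (z j)).det
        = ∑ r ∈ (Fintype.piFinset (fun _ : Fin d => U)).filter
            (fun r => Function.Injective r), gAux z c r := by
    intro U
    rw [expandAux]
    rw [Finset.sum_filter_of_ne]
    intro r _ hr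
    by_contra h
    exact hr (gAux_eq_zero z c h)
  rw [key]
  rw [← Finset.sum_fiberwise_of_maps_to
    (g := fun r : Fin d → Fin n => Finset.image r Finset.univ)
    (t := T.powersetCard d) ?hmaps]
  case hmaps =>
    intro r hr
    rw [Finset.mem_filter, Fintype.mem_piFinset] at hr
    rw [Finset.mem_powersetCard]
    constructor
    · intro x hx
      rw [Finset.mem_image] at hx
      obtain ⟨i, _, rfl⟩ := hx
      exact hr.1 i
    · rw [Finset.card_image_of_injective _ hr.2, Finset.card_univ, Fintype.card_fin]
  refine Finset.sum_congr rfl fun S hS => ?_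
  rw [Finset.mem_powersetCard] at hS
  rw [key S]
  refine Finset.sum_congr ?_ fun _ _ => rfl
  ext r
  simp only [Finset.mem_filter, Fintype.mem_piFinset]
  constructor
  · rintro ⟨⟨hmem, hinj⟩, himg⟩
    refine ⟨fun i => ?_, hinj⟩
    rw [← himg]
    exact Finset.mem_image_of_mem r (Finset.mem_univ i)
  · rintro ⟨hmem, hinj⟩
    refine ⟨⟨fun i => hS.1 (hmem i), hinj⟩, ?_⟩
    apply Finset.eq_of_subset_of_card_le
    · intro x hx
      rw [Finset.mem_image] at hx
      obtain ⟨i, _, rfl⟩ := hx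
      exact hmem i
    · rw [Finset.card_image_of_injective _ hinj, Finset.card_univ, Fintype.card_fin, hS.2]

end Aux

/-- If unit vectors `z i` satisfy `∑ i, c i • z i ⊗ z i = I_d`, then with
`λ_S = det (∑_{j ∈ S} c j • z j ⊗ z j)` for `d`-subsets `S`, one has
`∑_{S ∋ i, |S| = d} λ_S = c i` for every `i`, and `∑_{|S| = d} λ_S = 1`. -/
theorem stmt11 {d n : ℕ} (z : Fin n → Fin d → ℝ) (c : Fin n → ℝ)
    (hc : ∀ i, 0 < c i) (hunit : ∀ i, z i ⬝ᵥ z i = 1)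
    (hiso : ∑ i, c i • Matrix.vecMulVec (z i) (z i) = (1 : Matrix (Fin d) (Fin d) ℝ))
    (lam : Finset (Fin n) → ℝ)
    (hlam : ∀ S, lam S = (∑ j ∈ S, c j • Matrix.vecMulVec (z j) (z j)).det) :
    (∀ i, ∑ S ∈ Finset.filter (fun S => i ∈ S) (Finset.univ.powersetCard d), lam S = c i)
      ∧ ∑ S ∈ Finset.univ.powersetCard d, lam S = 1 := by
  classical
  have htot : ∑ S ∈ Finset.univ.powersetCard d, lam S = 1 := by
    have := cauchyBinet z c Finset.univ
    rw [hiso, Matrix.det_one] at this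
    rw [Finset.sum_congr rfl (fun S _ => hlam S), ← this]
  refine ⟨fun i => ?_, htot⟩
  -- sum over sets avoiding i
  have herase : ∑ S ∈ Finset.filter (fun S => i ∉ S) (Finset.univ.powersetCard d), lam S
      = 1 - c i := by
    have hfilt : Finset.filter (fun S => i ∉ S) (Finset.univ.powersetCard d)
        = (Finset.univ.erase i).powersetCard d := by
      ext S
      simp only [Finset.mem_filter, Finset.mem_powersetCard, Finset.subset_erase]
      tauto
    rw [hfilt, Finset.sum_congr rfl (fun S _ => hlam S), ← cauchyBinet z c]
    have hsum : ∑ j ∈ Finset.univ.erase i, c j • Matrix.vecMulVec (z j) (z j)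
        = 1 - c i • Matrix.vecMulVec (z i) (z i) := by
      rw [Finset.sum_erase_eq_sub (Finset.mem_univ i), hiso]
    rw [hsum]
    have hmat : (1 : Matrix (Fin d) (Fin d) ℝ) - c i • Matrix.vecMulVec (z i) (z i)
        = 1 + Matrix.replicateCol Unit (-(c i) • z i) * Matrix.replicateRow Unit (z i) := by
      ext a b
      simp [Matrix.vecMulVec_apply, Matrix.mul_apply, sub_eq_add_neg, mul_assoc]
    rw [hmat, Matrix.det_one_add_replicateCol_mul_replicateRow]
    have : z i ⬝ᵥ (-(c i) • z i) = -(c i) := by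
      rw [dotProduct_smul, hunit i]
      simp
    rw [this]
    ring
  have hsplit := Finset.sum_filter_add_sum_filter_not (Finset.univ.powersetCard d)
    (fun S => i ∈ S) lam
  rw [htot] at hsplit
  have : ∑ S ∈ Finset.filter (fun S => i ∈ S) (Finset.univ.powersetCard d), lam S
      = 1 - (1 - c i) := by
    rw [← herase]; linarith
  rw [this]; ring
end

section
/- If t* is a point where sup_t {⟨c,t⟩ − Φ(t)} is attained (so ∇Φ(t*) = c), then the matrix Q(t*)^{-1/2} puts X in radial c-isotropic position: Σ_{i=1}^n c_i ((Q(t*)^{-1/2} x_i)/|Q(t*)^{-1/2} x_i|) ⊗ ((Q(t*)^{-1/2} x_i)/|Q(t*)^{-1/2} x_i|) = I_d. -/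
/-!
Maximality of `⟨c, t⟩ - Φ(t)` at `t*` forces `∂Φ/∂t_j (t*) = c_j`. Along the `j`-th coordinate,
`Q(t)` changes by a multiple of `x_j ⊗ x_j`, so the matrix determinant lemma gives
`∂Φ/∂t_j (t*) = e^{t*_j} ⟨x_j, Q(t*)⁻¹ x_j⟩ = e^{t*_j} |B x_j|²` with `B = Q(t*)^{-1/2}`.
Hence `c_j / |B x_j|² = e^{t*_j}`, and the sum collapses to
`∑ e^{t*_j} (B x_j) ⊗ (B x_j) = B Q(t*) B = I`.
-/

open Finset Real Matrix

theorem Finset.sum_update_eq_add_sub {ι M : Type*} [Fintype ι] [DecidableEq ι] [AddCommGroup M]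
    (f : ι → M) (j : ι) (b : M) :
    ∑ i, Function.update f j b i = ∑ i, f i + (b - f j) := by
  rw [sum_update_of_mem (mem_univ j), sum_eq_add_sum_sdiff_singleton_of_mem (mem_univ j) f]
  abel

namespace Matrix

variable {ι l m α : Type*} [Fintype m]

theorem det_add_vecMulVec [CommRing α] [DecidableEq m] {A : Matrix m m α} (hA : IsUnit A.det)
    (u v : m → α) :
    (A + vecMulVec u v).det = A.det * (1 + v ⬝ᵥ A⁻¹ *ᵥ u) := by
  rw [vecMulVec_eq Unit, det_add_replicateCol_mul_replicateRow hA,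
    det_unique (1 + _ : Matrix Unit Unit α), add_apply, one_apply_eq, Matrix.mul_assoc,
    ← replicateCol_mulVec, replicateRow_mul_replicateCol_apply]

theorem mul_mul_eq_one_of_mul_self_eq_inv [CommRing α] [DecidableEq m] {A B : Matrix m m α}
    (hA : IsUnit A.det) (hB : B * B = A⁻¹) : B * A * B = 1 :=
  mul_eq_one_comm.mp <| by rw [← Matrix.mul_assoc, hB, nonsing_inv_mul A hA]

theorem vecMulVec_mulVec_mulVec [CommSemiring α] (B : Matrix l m α) (u : m → α) :
    vecMulVec (B *ᵥ u) (B *ᵥ u) = B * vecMulVec u u * Bᵀ := by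
  rw [mul_vecMulVec, vecMulVec_mul, vecMul_transpose]

theorem dotProduct_vecMulVec_self_mulVec (a v : m → ℝ) :
    v ⬝ᵥ vecMulVec a a *ᵥ v = (a ⬝ᵥ v) ^ 2 := by
  rw [vecMulVec_mulVec, op_smul_eq_smul, dotProduct_smul, smul_eq_mul, dotProduct_comm, sq]

theorem smul_vecMulVec_inv_sqrt_smul (a : ℝ) (v : m → ℝ) :
    (a * (v ⬝ᵥ v)) • vecMulVec ((√(v ⬝ᵥ v))⁻¹ • v) ((√(v ⬝ᵥ v))⁻¹ • v) =
      a • vecMulVec v v := by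
  rcases eq_or_ne v 0 with rfl | hv
  · simp
  have hpos : 0 < v ⬝ᵥ v :=
    (dotProduct_self_star_nonneg v).lt_of_ne' (mt dotProduct_self_eq_zero.mp hv)
  rw [smul_vecMulVec, vecMulVec_smul, smul_smul, smul_smul]
  congr 1
  field_simp
  rw [sq_sqrt hpos.le]

theorem posDef_sum_smul_vecMulVec_self [Fintype ι] {x : ι → m → ℝ}
    (hx : Submodule.span ℝ (Set.range x) = ⊤) {w : ι → ℝ} (hw : ∀ i, 0 < w i) :
    (∑ i, w i • vecMulVec (x i) (x i)).PosDef := by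
  rw [posDef_iff_dotProduct_mulVec]
  refine ⟨by simp [IsHermitian, transpose_sum, transpose_vecMulVec], fun v hv => ?_⟩
  obtain ⟨i, hi⟩ : ∃ i, x i ⬝ᵥ v ≠ 0 := by
    by_contra! h
    refine hv (dotProduct_self_eq_zero.mp ?_)
    have := LinearMap.ext_on_range hx (f := (dotProductBilin ℝ ℝ).flip v) (g := 0) h
    simpa using LinearMap.congr_fun this v
  simp only [star_trivial, sum_mulVec, smul_mulVec, dotProduct_sum, dotProduct_smul,
    dotProduct_vecMulVec_self_mulVec, smul_eq_mul]
  exact sum_pos' (fun j _ => mul_nonneg (hw j).le (sq_nonneg _))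
    ⟨i, mem_univ i, mul_pos (hw i) (pow_two_pos_of_ne_zero hi)⟩

end Matrix

section expGram

variable {ι m : Type*} [Fintype ι]

/-- The matrix `Q(t)`. -/
noncomputable def expGram (x : ι → m → ℝ) (t : ι → ℝ) : Matrix m m ℝ :=
  ∑ i, exp (t i) • vecMulVec (x i) (x i)

theorem expGram_update [DecidableEq ι] (x : ι → m → ℝ) (t : ι → ℝ) (j : ι) (s : ℝ) :
    expGram x (Function.update t j s) =
      expGram x t + (exp s - exp (t j)) • vecMulVec (x j) (x j) := by
  rw [expGram, expGram, sub_smul]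
  simp only [Function.apply_update (fun i r => exp r • vecMulVec (x i) (x i)),
    sum_update_eq_add_sub]

theorem hasDerivAt_sum_mul_update [DecidableEq ι] (c t : ι → ℝ) (j : ι) :
    HasDerivAt (fun s => ∑ i, c i * Function.update t j s i) (c j) (t j) := by
  simp only [Function.apply_update (fun i r => c i * r), sum_update_eq_add_sub]
  simpa using (((hasDerivAt_id (t j)).const_mul (c j)).sub_const (c j * t j)).const_add
    (∑ i, c i * t i)

variable [Fintype m]

theorem posDef_expGram {x : ι → m → ℝ} (hx : Submodule.span ℝ (Set.range x) = ⊤)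
    (t : ι → ℝ) : (expGram x t).PosDef :=
  posDef_sum_smul_vecMulVec_self hx fun i => exp_pos (t i)

variable [DecidableEq m]

theorem hasDerivAt_log_det_expGram_update [DecidableEq ι] {x : ι → m → ℝ} {t : ι → ℝ}
    (ht : (expGram x t).det ≠ 0) (j : ι) :
    HasDerivAt (fun s => log (expGram x (Function.update t j s)).det)
      (exp (t j) * (x j ⬝ᵥ (expGram x t)⁻¹ *ᵥ x j)) (t j) := by
  set γ := x j ⬝ᵥ (expGram x t)⁻¹ *ᵥ x j
  have hdet : ∀ s, (expGram x (Function.update t j s)).det =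
      (expGram x t).det * (1 + (exp s - exp (t j)) * γ) := fun s => by
    rw [expGram_update, ← smul_vecMulVec, det_add_vecMulVec ht.isUnit, mulVec_smul,
      dotProduct_smul, smul_eq_mul]
  simp only [hdet]
  have := (((((hasDerivAt_exp (t j)).sub_const (exp (t j))).mul_const γ).const_add 1).const_mul
    (expGram x t).det).log (by simpa using ht)
  convert this using 1
  field_simp
  ring

theorem eq_exp_mul_of_isMaxOn_sub_log_det_expGram [DecidableEq ι] {x : ι → m → ℝ}
    (hx : Submodule.span ℝ (Set.range x) = ⊤) {c t₀ : ι → ℝ}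
    (hmax : IsMaxOn (fun t => ∑ i, c i * t i - log (expGram x t).det) Set.univ t₀) (j : ι) :
    c j = exp (t₀ j) * (x j ⬝ᵥ (expGram x t₀)⁻¹ *ᵥ x j) := by
  have hloc : IsLocalMax (fun s => ∑ i, c i * Function.update t₀ j s i -
      log (expGram x (Function.update t₀ j s)).det) (t₀ j) :=
    Filter.Eventually.of_forall fun s => by
      simpa using hmax (Set.mem_univ (Function.update t₀ j s))
  have hderiv := (hasDerivAt_sum_mul_update c t₀ j).sub
    (hasDerivAt_log_det_expGram_update (posDef_expGram hx t₀).det_pos.ne' j)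
  exact sub_eq_zero.mp (hloc.hasDerivAt_eq_zero hderiv)

end expGram

theorem stmt12_general {d n : ℕ} (x : Fin n → Fin d → ℝ) (c : Fin n → ℝ)
    (hspan : Submodule.span ℝ (Set.range x) = ⊤)
    (tstar : Fin n → ℝ)
    (hmax : ∀ t : Fin n → ℝ,
      (∑ i, c i * t i) -
          Real.log (∑ i, Real.exp (t i) • Matrix.vecMulVec (x i) (x i)).det
        ≤ (∑ i, c i * tstar i) -
          Real.log (∑ i, Real.exp (tstar i) • Matrix.vecMulVec (x i) (x i)).det)
    (B : Matrix (Fin d) (Fin d) ℝ) (hB : B.PosDef)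
    (hB2 : B * B = (∑ i, Real.exp (tstar i) • Matrix.vecMulVec (x i) (x i))⁻¹) :
    ∑ i, c i • Matrix.vecMulVec
        ((Real.sqrt (B.mulVec (x i) ⬝ᵥ B.mulVec (x i)))⁻¹ • B.mulVec (x i))
        ((Real.sqrt (B.mulVec (x i) ⬝ᵥ B.mulVec (x i)))⁻¹ • B.mulVec (x i)) =
      (1 : Matrix (Fin d) (Fin d) ℝ) := by
  change B * B = (expGram x tstar)⁻¹ at hB2
  have hcrit := eq_exp_mul_of_isMaxOn_sub_log_det_expGram hspan (fun t _ => hmax t)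
  have hBt : Bᵀ = B := by simpa [conjTranspose_eq_transpose_of_trivial] using hB.isHermitian.eq
  have hnorm : ∀ i, B *ᵥ x i ⬝ᵥ B *ᵥ x i = x i ⬝ᵥ (expGram x tstar)⁻¹ *ᵥ x i := fun i => by
    rw [← hB2, ← mulVec_mulVec, dotProduct_mulVec (x i) B, ← mulVec_transpose, hBt]
  calc _ = ∑ i, exp (tstar i) • vecMulVec (B *ᵥ x i) (B *ᵥ x i) :=
        sum_congr rfl fun i _ => by rw [hcrit i, ← hnorm i, smul_vecMulVec_inv_sqrt_smul]
    _ = B * expGram x tstar * Bᵀ := by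
        simp only [expGram, Finset.mul_sum, Finset.sum_mul, Matrix.mul_smul, Matrix.smul_mul,
          vecMulVec_mulVec_mulVec]
    _ = 1 := by
        rw [hBt, mul_mul_eq_one_of_mul_self_eq_inv (posDef_expGram hspan tstar).det_pos.ne'.isUnit
          hB2]

/-- If `t*` attains `sup_t (⟨c, t⟩ - Φ(t))`, then `Q(t*)^{-1/2}` (the positive definite
matrix `B` with `B * B = Q(t*)⁻¹`) puts `X` in radial `c`-isotropic position:
`∑ i, c i • (B x i / |B x i|) ⊗ (B x i / |B x i|) = I_d`. -/
theorem stmt12 {d n : ℕ} (x : Fin n → Fin d → ℝ) (c : Fin n → ℝ)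
    (hc : ∀ i, 0 < c i) (hcsum : ∑ i, c i = (d : ℝ))
    (hunit : ∀ i, x i ⬝ᵥ x i = 1)
    (hspan : Submodule.span ℝ (Set.range x) = ⊤)
    (tstar : Fin n → ℝ)
    (hmax : ∀ t : Fin n → ℝ,
      (∑ i, c i * t i) -
          Real.log (∑ i, Real.exp (t i) • Matrix.vecMulVec (x i) (x i)).det
        ≤ (∑ i, c i * tstar i) -
          Real.log (∑ i, Real.exp (tstar i) • Matrix.vecMulVec (x i) (x i)).det)
    (B : Matrix (Fin d) (Fin d) ℝ) (hB : B.PosDef)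
    (hB2 : B * B = (∑ i, Real.exp (tstar i) • Matrix.vecMulVec (x i) (x i))⁻¹) :
    ∑ i, c i • Matrix.vecMulVec
        ((Real.sqrt (B.mulVec (x i) ⬝ᵥ B.mulVec (x i)))⁻¹ • B.mulVec (x i))
        ((Real.sqrt (B.mulVec (x i) ⬝ᵥ B.mulVec (x i)))⁻¹ • B.mulVec (x i)) =
      (1 : Matrix (Fin d) (Fin d) ℝ) :=
  stmt12_general x c hspan tstar hmax B hB hB2
end

section
/- Let u_1,...,u_n ∈ R^d be the rows of an n×d matrix U whose columns are orthonormal (equivalently Σ_i u_i ⊗ u_i = I_d). Then the n×n matrix H with H_jj = |u_j|^2 − |u_j|^4 and H_jk = −⟨u_j,u_k⟩^2 for j ≠ k satisfies H·1 = 0 and has spectral norm at most 1/2 (i.e., y^T H y ≤ |y|^2/2 for all y ∈ R^n). -/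
open Matrix

/-!
The Gram matrix `G j k = ⟨u j, u k⟩` is `U Uᵀ` with `Uᵀ U = 1`, hence a symmetric idempotent,
so `∑ k, G j k ^ 2 = (G * G) j j = G j j`. Therefore `H` is the Laplacian of the weighted graph
with weights `G j k ^ 2`: it kills `1`, and for nonnegative symmetric weights the quadratic form
of a Laplacian is at most twice its diagonal part. The diagonal entries `t - t²` with
`t = |u j|²` are at most `1 / 4`, which gives the bound `1 / 2`.
-/

namespace Matrix

variable {n : Type*} [Fintype n]

theorem sum_sq_apply_of_isSymm_of_mul_self {P : Matrix n n ℝ} (hP : P.IsSymm) (hPP : P * P = P)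
    (j : n) : ∑ k, P j k ^ 2 = P j j := by
  conv_rhs => rw [← hPP]
  simp_rw [mul_apply, sq]
  exact Finset.sum_congr rfl fun k _ => by rw [hP.apply j k]

theorem gram_mul_self_of_sum_vecMulVec_eq_one {m : Type*} [Fintype m] [DecidableEq m]
    (u : n → m → ℝ) (hu : ∑ i, vecMulVec (u i) (u i) = 1) :
    (of fun j k => u j ⬝ᵥ u k) * (of fun j k => u j ⬝ᵥ u k) = of fun j k => u j ⬝ᵥ u k := by
  have hgram : (of fun j k => u j ⬝ᵥ u k) = of u * (of u)ᵀ := by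
    ext j k
    simp [mul_apply, dotProduct]
  have horth : (of u)ᵀ * of u = 1 := by
    rw [← hu]
    ext p q
    simp [mul_apply, sum_apply, vecMulVec_apply]
  rw [hgram, Matrix.mul_assoc, ← Matrix.mul_assoc (of u)ᵀ, horth, Matrix.one_mul]

theorem sum_sq_dotProduct_of_sum_vecMulVec_eq_one {m : Type*} [Fintype m] [DecidableEq m]
    (u : n → m → ℝ) (hu : ∑ i, vecMulVec (u i) (u i) = 1) (j : n) :
    ∑ k, (u j ⬝ᵥ u k) ^ 2 = u j ⬝ᵥ u j :=
  sum_sq_apply_of_isSymm_of_mul_self (IsSymm.ext fun _ _ => dotProduct_comm _ _)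
    (gram_mul_self_of_sum_vecMulVec_eq_one u hu) j

variable [DecidableEq n]

def laplacian (w : Matrix n n ℝ) : Matrix n n ℝ := diagonal (fun j => ∑ k, w j k) - w

theorem laplacian_apply (w : Matrix n n ℝ) (j k : n) :
    laplacian w j k = (if j = k then ∑ l, w j l else 0) - w j k := by
  simp [laplacian, diagonal_apply]

theorem laplacian_mulVec_one (w : Matrix n n ℝ) : laplacian w *ᵥ 1 = 0 := by
  ext j
  rw [laplacian, sub_mulVec, Pi.sub_apply, mulVec_diagonal]
  simp [mulVec, dotProduct]

theorem dotProduct_laplacian_mulVec (w : Matrix n n ℝ) (y : n → ℝ) :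
    y ⬝ᵥ laplacian w *ᵥ y = ∑ j, (∑ k, w j k) * y j ^ 2 - ∑ j, ∑ k, w j k * y j * y k := by
  rw [laplacian, sub_mulVec, dotProduct_sub]
  congr 1
  · simp only [dotProduct, mulVec_diagonal]
    exact Finset.sum_congr rfl fun j _ => by ring
  · simp only [dotProduct, mulVec, Finset.mul_sum]
    exact Finset.sum_congr rfl fun j _ => Finset.sum_congr rfl fun k _ => by ring

theorem dotProduct_laplacian_mulVec_le {w : Matrix n n ℝ} (hw : w.IsSymm)
    (hw₀ : ∀ j k, 0 ≤ w j k) (y : n → ℝ) :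
    y ⬝ᵥ laplacian w *ᵥ y ≤ 2 * ∑ j, laplacian w j j * y j ^ 2 := by
  have hdiag : ∑ j, laplacian w j j * y j ^ 2 =
      ∑ j, (∑ k, w j k) * y j ^ 2 - ∑ j, w j j * y j ^ 2 := by
    simp only [laplacian_apply, if_true, sub_mul, Finset.sum_sub_distrib]
  -- `-w_jk y_j y_k ≤ w_jk (y_j² + y_k²) / 2`, sharpened by `2 w_jj y_j²` on the diagonal
  have hterm : ∀ j k, (if j = k then 2 * (w j j * y j ^ 2) else 0) -
      (w j k * y j ^ 2 + w j k * y k ^ 2) / 2 ≤ w j k * y j * y k := by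
    intro j k
    split_ifs with h
    · subst h; linarith
    · nlinarith [mul_nonneg (hw₀ j k) (sq_nonneg (y j + y k))]
  have hsymm : ∑ j, ∑ k, w j k * y k ^ 2 = ∑ j, (∑ k, w j k) * y j ^ 2 := by
    rw [Finset.sum_comm]
    simp_rw [Finset.sum_mul]
    exact Finset.sum_congr rfl fun j _ => Finset.sum_congr rfl fun k _ => by rw [hw.apply j k]
  have hsum := Finset.sum_le_sum fun j (_ : j ∈ Finset.univ) =>
    Finset.sum_le_sum fun k (_ : k ∈ Finset.univ) => hterm j k
  simp only [Finset.sum_sub_distrib, Finset.sum_ite_eq, Finset.mem_univ, if_true,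
    ← Finset.sum_div, Finset.sum_add_distrib, hsymm, ← Finset.sum_mul,
    ← Finset.mul_sum] at hsum
  rw [dotProduct_laplacian_mulVec, hdiag]
  linarith

end Matrix

/-- If `u 1, ..., u n ∈ ℝ^d` are the rows of a matrix with orthonormal columns
(equivalently `∑ i, u i ⊗ u i = I_d`), then the matrix `H` with
`H j j = |u j|² - |u j|⁴` and `H j k = -⟨u j, u k⟩²` for `j ≠ k` satisfies
`H · 1 = 0` and `yᵀ H y ≤ |y|² / 2` for all `y`. -/
theorem stmt13 {d n : ℕ} (u : Fin n → Fin d → ℝ)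
    (horth : ∑ i, Matrix.vecMulVec (u i) (u i) = (1 : Matrix (Fin d) (Fin d) ℝ))
    (H : Matrix (Fin n) (Fin n) ℝ)
    (hH : ∀ j k, H j k =
      if j = k then (u j ⬝ᵥ u j) - (u j ⬝ᵥ u j) ^ 2 else -(u j ⬝ᵥ u k) ^ 2) :
    H.mulVec (fun _ => 1) = 0 ∧ ∀ y : Fin n → ℝ, y ⬝ᵥ H.mulVec y ≤ (y ⬝ᵥ y) / 2 := by
  set w : Matrix (Fin n) (Fin n) ℝ := of fun j k => (u j ⬝ᵥ u k) ^ 2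
  have hHw : H = laplacian w := by
    ext j k
    rw [hH, laplacian_apply]
    split_ifs with hjk
    · subst hjk
      simp only [w, of_apply, sum_sq_dotProduct_of_sum_vecMulVec_eq_one u horth]
    · simp [w]
  refine ⟨hHw ▸ laplacian_mulVec_one w, fun y => ?_⟩
  have hw : w.IsSymm := IsSymm.ext fun j k => by simp [w, dotProduct_comm]
  calc y ⬝ᵥ H *ᵥ y ≤ 2 * ∑ j, H j j * y j ^ 2 :=
        hHw ▸ dotProduct_laplacian_mulVec_le hw (fun j k => sq_nonneg _) y
    _ ≤ 2 * ∑ j, y j ^ 2 / 4 := by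
        gcongr with j
        rw [hH, if_pos rfl]
        nlinarith [sq_nonneg (u j ⬝ᵥ u j - 1 / 2), sq_nonneg (y j)]
    _ = (y ⬝ᵥ y) / 2 := by
        simp only [dotProduct, ← Finset.sum_div, sq]
        ring
end

section
/- Let X be a set of n unit vectors spanning R^d, E a subspace of dimension k < d, and A ⊂ [n] with |A| = k+1 such that (x_i)_{i∈A} are linearly independent and dist(x_i, E) ≤ δ for each i ∈ A. Then there exists B ⊂ [n] with |B| = d−k−1 such that (x_i)_{i∈A∪B} is a basis of R^d whose determinant has absolute value at most (1+δ)^{k+1} − 1. -/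
/-!
Decompose each `x i`, `i ∈ A`, as `y i + z i` with `y i` the orthogonal projection onto `E`, so
`‖y i‖ ≤ 1` and `‖z i‖ ≤ δ`, and expand the determinant multilinearly: the terms are indexed by
the subsets `s ⊆ A` of positions where `z i` is taken instead of `y i`. The term `s = ∅` vanishes,
since it has `k + 1` vectors in the `k`-dimensional space `E`; by Hadamard's inequality every other
term is at most `δ ^ #s`, and these bounds sum to `(1 + δ) ^ (k + 1) - 1`. The indices `B` come
from extending `(x i)_{i ∈ A}` to a basis drawn from the spanning family `x`.
-/

open Matrix Finset Module

theorem OrthonormalBasis.abs_det_le_prod_norm {F : Type*} [NormedAddCommGroup F]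
    [InnerProductSpace ℝ F] {n : ℕ} (b : OrthonormalBasis (Fin n) ℝ F) (v : Fin n → F) :
    |b.toBasis.det v| ≤ ∏ i, ‖v i‖ := by
  have : Fact (finrank ℝ F = n) := ⟨by simpa using finrank_eq_card_basis b.toBasis⟩
  rw [← b.toBasis.orientation.volumeForm_robust' b v]
  exact Orientation.abs_volumeForm_apply_le _ v

theorem EuclideanSpace.basisFun_toBasis_det_toLp {𝕜 ι : Type*} [RCLike 𝕜] [Fintype ι]
    [DecidableEq ι] (w : ι → ι → 𝕜) :
    (EuclideanSpace.basisFun ι 𝕜).toBasis.det (fun j => WithLp.toLp 2 (w j)) =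
      (Matrix.of fun i j => w j i).det := by
  rw [Basis.det_apply]
  congr 1

theorem EuclideanSpace.norm_toLp_eq_sqrt_dotProduct {ι : Type*} [Fintype ι] (w : ι → ℝ) :
    ‖WithLp.toLp 2 w‖ = √(w ⬝ᵥ w) := by
  rw [norm_eq_sqrt_real_inner, EuclideanSpace.inner_eq_star_dotProduct]
  simp

theorem Submodule.norm_sub_starProjection_le {𝕜 F : Type*} [RCLike 𝕜] [NormedAddCommGroup F]
    [InnerProductSpace 𝕜 F] (K : Submodule 𝕜 F) [K.HasOrthogonalProjection] (x : F) {y : F}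
    (hy : y ∈ K) : ‖x - K.starProjection x‖ ≤ ‖x - y‖ := by
  rw [starProjection_minimal]
  exact ciInf_le ⟨0, Set.forall_mem_range.mpr fun _ => norm_nonneg _⟩ (⟨y, hy⟩ : K)

theorem Submodule.not_linearIndependent_of_finrank_lt {K V ι : Type*} [DivisionRing K]
    [AddCommGroup V] [Module K V] {E : Submodule K V} [FiniteDimensional K E] {T : Finset ι}
    (hT : finrank K E < #T) {y : ι → V} (hy : ∀ i ∈ T, y i ∈ E) : ¬ LinearIndependent K y := by
  intro hli
  have hliE : LinearIndependent K fun i : T => (⟨y i, hy i i.2⟩ : E) :=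
    .of_comp E.subtype (hli.comp _ Subtype.val_injective)
  exact hT.not_ge (by simpa using hliE.fintype_card_le_finrank)

theorem exists_disjoint_linearIndepOn_union {K V ι : Type*} [DivisionRing K] [AddCommGroup V]
    [Module K V] [FiniteDimensional K V] [DecidableEq ι] {v : ι → V}
    (hv : Submodule.span K (Set.range v) = ⊤) {A : Finset ι} (hA : LinearIndepOn K v A) :
    ∃ B : Finset ι, Disjoint A B ∧ #A + #B = finrank K V ∧ LinearIndepOn K v ↑(A ∪ B) := by
  obtain ⟨S, -, hAS, hspan, hS⟩ := exists_linearIndepOn_extension hA (Set.subset_univ _)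
  have : Finite S := LinearIndependent.finite hS
  obtain ⟨S, rfl⟩ := S.toFinite.exists_finset_coe
  have hSspan : Submodule.span K (v '' S) = ⊤ := by
    rw [eq_top_iff, ← hv, Submodule.span_le, ← Set.image_univ]
    exact hspan
  have hAS : A ⊆ S := by exact_mod_cast hAS
  refine ⟨S \ A, disjoint_sdiff, ?_, ?_⟩
  · rw [← card_union_of_disjoint disjoint_sdiff, union_sdiff_of_subset hAS,
      ← finrank_top K V, ← hSspan, Set.image_eq_range, finrank_span_eq_card hS]
    simp
  · rwa [union_sdiff_of_subset hAS]

theorem Finset.card_preimage_val_equiv {α ι : Type*} {A S : Finset α} (hAS : A ⊆ S)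
    (e : ι ≃ S) :
    #(A.preimage (fun j => (e j).1) (Subtype.val_injective.comp e.injective).injOn) = #A := by
  classical
  rw [card_preimage, filter_true_of_mem]
  exact fun i hi => ⟨e.symm ⟨i, hAS hi⟩, by simp⟩

theorem sum_powerset_erase_empty_pow {ι R : Type*} [CommRing R] [DecidableEq ι]
    (T : Finset ι) (δ : R) : ∑ s ∈ T.powerset.erase ∅, δ ^ #s = (1 + δ) ^ #T - 1 := by
  rw [sum_erase_eq_sub (empty_mem_powerset T), ← prod_const (1 + δ), prod_one_add]
  simp

theorem AlternatingMap.abs_apply_piecewise_add_le {F ι : Type*} [NormedAddCommGroup F]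
    [NormedSpace ℝ F] [Fintype ι] [DecidableEq ι]
    (f : F [⋀^ι]→ₗ[ℝ] ℝ) (hf : ∀ w, |f w| ≤ ∏ i, ‖w i‖)
    {E : Submodule ℝ F} [FiniteDimensional ℝ E] {T : Finset ι} (hT : finrank ℝ E < #T)
    {y z : ι → F} {δ : ℝ} (hyE : ∀ i ∈ T, y i ∈ E) (hy : ∀ i, ‖y i‖ ≤ 1)
    (hz : ∀ i ∈ T, ‖z i‖ ≤ δ) :
    |f (T.piecewise (z + y) y)| ≤ (1 + δ) ^ #T - 1 := by
  have hterm : ∀ s ∈ T.powerset, |f (s.piecewise z y)| ≤ δ ^ #s := fun s hs =>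
    calc |f (s.piecewise z y)| ≤ ∏ i, ‖s.piecewise z y i‖ := hf _
      _ ≤ ∏ i, s.piecewise (fun _ => δ) (fun _ => 1) i := by
        refine prod_le_prod (fun _ _ => norm_nonneg _) fun i _ => ?_
        by_cases hi : i ∈ s
        · simpa [hi] using hz i (mem_powerset.mp hs hi)
        · simpa [hi] using hy i
      _ = δ ^ #s := by simp [prod_piecewise]
  have hexpand : f (T.piecewise (z + y) y) = ∑ s ∈ T.powerset, f (s.piecewise z y) :=
    f.toMultilinearMap.map_piecewise_add z y T
  rw [hexpand, ← sum_erase_add _ _ (empty_mem_powerset T), piecewise_empty,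
    f.map_linearDependent y (E.not_linearIndependent_of_finrank_lt hT hyE), add_zero,
    ← sum_powerset_erase_empty_pow]
  exact (abs_sum_le_sum_abs _ _).trans
    (sum_le_sum fun s hs => hterm s (mem_of_mem_erase hs))

theorem stmt15_general {d n : ℕ} (x : Fin n → Fin d → ℝ) (δ : ℝ)
    (hunit : ∀ i, x i ⬝ᵥ x i = 1)
    (hspan : Submodule.span ℝ (Set.range x) = ⊤)
    (E : Submodule ℝ (Fin d → ℝ)) (k : ℕ)
    (hE : Module.finrank ℝ E = k)
    (A : Finset (Fin n)) (hA : A.card = k + 1)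
    (hind : LinearIndependent ℝ (fun i : {i // i ∈ A} => x i.1))
    (hclose : ∀ i ∈ A, ∃ y ∈ E, Real.sqrt ((x i - y) ⬝ᵥ (x i - y)) ≤ δ) :
    ∃ B : Finset (Fin n), Disjoint A B ∧ B.card = d - k - 1 ∧
      ∀ e : Fin d ≃ {i // i ∈ A ∪ B},
        LinearIndependent ℝ (fun i : Fin d => x (e i).1) ∧
        |Matrix.det (Matrix.of fun i j => x (e j).1 i)| ≤ (1 + δ) ^ (k + 1) - 1 := by
  obtain ⟨B, hAB, hcard, hli⟩ := exists_disjoint_linearIndepOn_union hspan hind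
  refine ⟨B, hAB, by rw [finrank_fin_fun] at hcard; omega, fun e => ⟨hli.comp e e.injective, ?_⟩⟩
  let v j := WithLp.toLp 2 (x (e j))
  let E' := E.map (WithLp.linearEquiv 2 ℝ (Fin d → ℝ)).symm.toLinearMap
  let T := A.preimage (fun j => (e j).1) (Subtype.val_injective.comp e.injective).injOn
  let y := T.piecewise (fun j => E'.starProjection (v j)) v
  have hv j : ‖v j‖ = 1 := by simp [v, EuclideanSpace.norm_toLp_eq_sqrt_dotProduct, hunit]
  have hTcard : #T = k + 1 := (card_preimage_val_equiv subset_union_left e).trans hA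
  have hT : finrank ℝ E' < #T := by rw [LinearEquiv.finrank_map_eq, hE, hTcard]; omega
  have hyE : ∀ j ∈ T, y j ∈ E' := fun j hj => by simp [y, hj]
  have hy j : ‖y j‖ ≤ 1 := by
    by_cases hj : j ∈ T
    · simpa [y, hj, hv] using E'.norm_starProjection_apply_le (v j)
    · simp [y, hj, hv]
  have hz : ∀ j ∈ T, ‖(v - y) j‖ ≤ δ := fun j hj => by
    obtain ⟨y₀, hy₀, hδ⟩ := hclose _ (mem_preimage.mp hj)
    calc ‖(v - y) j‖ ≤ ‖v j - WithLp.toLp 2 y₀‖ := by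
          simpa [y, hj] using E'.norm_sub_starProjection_le (v j) (Submodule.mem_map_of_mem hy₀)
      _ ≤ δ := by rwa [← WithLp.toLp_sub, EuclideanSpace.norm_toLp_eq_sqrt_dotProduct]
  have key := (EuclideanSpace.basisFun (Fin d) ℝ).toBasis.det.abs_apply_piecewise_add_le
    (OrthonormalBasis.abs_det_le_prod_norm _) hT hyE hy hz
  rwa [sub_add_cancel, piecewise_idem_right, piecewise_same,
    EuclideanSpace.basisFun_toBasis_det_toLp, hTcard] at key

/-- Let `x` be `n` unit vectors spanning `ℝ^d`, `E` a subspace of dimension `k < d`,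
and `A ⊆ [n]` with `|A| = k + 1` such that `(x i)_{i ∈ A}` are linearly independent and
`dist (x i, E) ≤ δ` for each `i ∈ A`. Then `A` can be completed by a set `B` of
`d - k - 1` further indices so that `(x i)_{i ∈ A ∪ B}` is a basis of `ℝ^d` whose
determinant has absolute value at most `(1 + δ)^{k+1} - 1`. -/
theorem stmt15 {d n : ℕ} (x : Fin n → Fin d → ℝ) (δ : ℝ) (hδ : 0 < δ)
    (hunit : ∀ i, x i ⬝ᵥ x i = 1)
    (hspan : Submodule.span ℝ (Set.range x) = ⊤)
    (E : Submodule ℝ (Fin d → ℝ)) (k : ℕ) (hk : k < d)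
    (hE : Module.finrank ℝ E = k)
    (A : Finset (Fin n)) (hA : A.card = k + 1)
    (hind : LinearIndependent ℝ (fun i : {i // i ∈ A} => x i.1))
    (hclose : ∀ i ∈ A, ∃ y ∈ E, Real.sqrt ((x i - y) ⬝ᵥ (x i - y)) ≤ δ) :
    ∃ B : Finset (Fin n), Disjoint A B ∧ B.card = d - k - 1 ∧
      ∀ e : Fin d ≃ {i // i ∈ A ∪ B},
        LinearIndependent ℝ (fun i : Fin d => x (e i).1) ∧
        |Matrix.det (Matrix.of fun i j => x (e j).1 i)| ≤ (1 + δ) ^ (k + 1) - 1 :=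
  stmt15_general x δ hunit hspan E k hE A hA hind hclose
end

section
/- Let z_1,...,z_k ∈ R^d be linearly independent vectors of norm at most 1, such that the Gram–Schmidt orthogonalization u_1,...,u_k of z_1,...,z_k satisfies |u_i| ≥ δ for all i. Let e_i = u_i/|u_i| and let w = Σ_i w_i e_i with |w_i| ≤ 1 for all i. Writing w = Σ_j β_j z_j (the unique representation), the coefficients satisfy |β_j| ≤ ζ(1+ζ)^{k−j} for j = 1,...,k, where ζ = 1/δ. -/
open Matrix

theorem dot_sum' {d : ℕ} {ι : Type*} (x : Fin d → ℝ) (s : Finset ι) (f : ι → Fin d → ℝ) :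
    x ⬝ᵥ (∑ i ∈ s, f i) = ∑ i ∈ s, x ⬝ᵥ f i := by
  simp only [dotProduct, Finset.sum_apply, Finset.mul_sum]
  rw [Finset.sum_comm]

theorem sum_dot' {d : ℕ} {ι : Type*} (x : Fin d → ℝ) (s : Finset ι) (f : ι → Fin d → ℝ) :
    (∑ i ∈ s, f i) ⬝ᵥ x = ∑ i ∈ s, f i ⬝ᵥ x := by
  simp only [dotProduct, Finset.sum_apply, Finset.sum_mul]
  rw [Finset.sum_comm]


/-- Let `z 1, ..., z k ∈ ℝ^d` be linearly independent vectors of norm at most `1` whose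
Gram–Schmidt orthogonalization `u 1, ..., u k` satisfies `|u i| ≥ δ` for all `i`. If
`w = ∑ i, w_i e_i` with `e_i = u i / |u i|` and `|w_i| ≤ 1`, then the (unique)
coefficients `β` with `w = ∑ j, β j • z j` satisfy `|β j| ≤ ζ (1 + ζ)^{k - j}` (with
`1`-based index `j`), where `ζ = 1/δ`. -/
theorem stmt16 {d k : ℕ} (z u : Fin k → Fin d → ℝ) (δ : ℝ) (hδ : 0 < δ)
    (hind : LinearIndependent ℝ z)
    (hznorm : ∀ i, z i ⬝ᵥ z i ≤ 1)
    (hGS : ∀ i, u i = z i - ∑ l ∈ Finset.filter (fun l => l < i) Finset.univ,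
        ((u l ⬝ᵥ z i) / (u l ⬝ᵥ u l)) • u l)
    (hδu : ∀ i, δ ^ 2 ≤ u i ⬝ᵥ u i)
    (w : Fin d → ℝ) (wc : Fin k → ℝ) (hwc : ∀ i, |wc i| ≤ 1)
    (hw : w = ∑ i, wc i • (Real.sqrt (u i ⬝ᵥ u i))⁻¹ • u i)
    (β : Fin k → ℝ) (hβ : w = ∑ j, β j • z j) :
    ∀ j : Fin k, |β j| ≤ δ⁻¹ * (1 + δ⁻¹) ^ (k - 1 - (j : ℕ)) := by
  have hS : ∀ i, 0 < u i ⬝ᵥ u i := fun i => lt_of_lt_of_le (by positivity) (hδu i)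
  -- orthogonality of the u's
  have ortho' : ∀ n : ℕ, ∀ i : Fin k, (i : ℕ) < n → ∀ j : Fin k, j < i → u j ⬝ᵥ u i = 0 := by
    intro n
    induction n with
    | zero => intro i hi; omega
    | succ n ih =>
      intro i hi j hj
      rcases Nat.lt_or_ge (i : ℕ) n with h | h
      · exact ih i h j hj
      rw [hGS i, dotProduct_sub, dot_sum']
      have hsum : ∑ l ∈ Finset.filter (fun l => l < i) Finset.univ,
          u j ⬝ᵥ (((u l ⬝ᵥ z i) / (u l ⬝ᵥ u l)) • u l) = u j ⬝ᵥ z i := by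
        rw [Finset.sum_eq_single j]
        · rw [dotProduct_smul, smul_eq_mul, div_mul_cancel₀ _ (hS j).ne']
        · intro b hb hbj
          rw [dotProduct_smul, smul_eq_mul]
          rcases lt_or_gt_of_ne hbj with hlt | hgt
          · have h0 := ih j (by omega) b hlt
            rw [dotProduct_comm] at h0
            rw [h0, mul_zero]
          · have hbi : b < i := (Finset.mem_filter.mp hb).2
            have h0 := ih b (by omega) j hgt
            rw [h0, mul_zero]
        · intro hji
          exact absurd (by simp [hj] : j ∈ Finset.filter (fun l => l < i) Finset.univ) hji
      rw [hsum, sub_self]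
  have ortho : ∀ i j : Fin k, j ≠ i → u j ⬝ᵥ u i = 0 := by
    intro i j hne
    rcases lt_or_gt_of_ne hne with h | h
    · exact ortho' (i + 1) i (Nat.lt_succ_self _) j h
    · rw [dotProduct_comm]
      exact ortho' (j + 1) j (Nat.lt_succ_self _) i h
  -- z i expressed via u's
  have hz : ∀ i, z i = u i + ∑ l ∈ Finset.filter (fun l => l < i) Finset.univ,
      ((u l ⬝ᵥ z i) / (u l ⬝ᵥ u l)) • u l := by
    intro i
    rw [hGS i]; ring
  -- z i ⬝ᵥ u j for i < j is 0
  have hzu_lt : ∀ i j : Fin k, i < j → z i ⬝ᵥ u j = 0 := by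
    intro i j hij
    rw [hz i, add_dotProduct, sum_dot', ortho j i (ne_of_lt hij)]
    rw [Finset.sum_eq_zero, add_zero]
    intro l hl
    have hli : l < i := (Finset.mem_filter.mp hl).2
    rw [smul_dotProduct, smul_eq_mul, ortho j l (ne_of_lt (lt_trans hli hij)), mul_zero]
  have hzu_self : ∀ j : Fin k, z j ⬝ᵥ u j = u j ⬝ᵥ u j := by
    intro j
    rw [hz j, add_dotProduct, sum_dot']
    rw [Finset.sum_eq_zero, add_zero]
    intro l hl
    have hlj : l < j := (Finset.mem_filter.mp hl).2
    rw [smul_dotProduct, smul_eq_mul, ortho j l (ne_of_lt hlj), mul_zero]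
  -- dot w with u j, two ways
  have key : ∀ j : Fin k, β j * (u j ⬝ᵥ u j) =
      wc j * Real.sqrt (u j ⬝ᵥ u j) - ∑ i ∈ Finset.Ioi j, β i * (z i ⬝ᵥ u j) := by
    intro j
    have hsq : (0:ℝ) < Real.sqrt (u j ⬝ᵥ u j) := Real.sqrt_pos.mpr (hS j)
    have h1 : w ⬝ᵥ u j = wc j * Real.sqrt (u j ⬝ᵥ u j) := by
      rw [hw, sum_dot']
      rw [Finset.sum_eq_single j]
      · rw [smul_dotProduct, smul_dotProduct, smul_eq_mul, smul_eq_mul]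
        congr 1
        rw [inv_mul_eq_div, div_eq_iff hsq.ne', Real.mul_self_sqrt (hS j).le]
      · intro b hb hbj
        rw [smul_dotProduct, smul_dotProduct, smul_eq_mul, smul_eq_mul,
          ortho j b hbj, mul_zero, mul_zero]
      · intro h; exact absurd (Finset.mem_univ j) h
    have hdisj : Disjoint (insert j (Finset.Ioi j)) (Finset.Iio j) := by
      rw [Finset.disjoint_left]
      intro a ha ha'
      simp only [Finset.mem_insert, Finset.mem_Ioi] at ha
      have ha2 : a < j := Finset.mem_Iio.mp ha'
      rcases ha with h | h
      · rw [h] at ha2; exact lt_irrefl _ ha2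
      · exact lt_irrefl _ (lt_trans h ha2)
    have hset : (Finset.univ : Finset (Fin k)) = insert j (Finset.Ioi j) ∪ Finset.Iio j := by
      ext x
      simp only [Finset.mem_univ, Finset.mem_union, Finset.mem_insert, Finset.mem_Ioi,
        Finset.mem_Iio, true_iff, Fin.lt_def, Fin.ext_iff]
      omega
    have h2 : w ⬝ᵥ u j = β j * (u j ⬝ᵥ u j) + ∑ i ∈ Finset.Ioi j, β i * (z i ⬝ᵥ u j) := by
      rw [hβ, sum_dot', hset, Finset.sum_union hdisj, Finset.sum_insert (by simp)]
      have e1 : ∑ x ∈ Finset.Iio j, (β x • z x) ⬝ᵥ u j = 0 :=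
        Finset.sum_eq_zero fun l hl => by
          rw [smul_dotProduct, smul_eq_mul, hzu_lt l j (Finset.mem_Iio.mp hl), mul_zero]
      have e2 : ∑ x ∈ Finset.Ioi j, (β x • z x) ⬝ᵥ u j
          = ∑ i ∈ Finset.Ioi j, β i * (z i ⬝ᵥ u j) :=
        Finset.sum_congr rfl fun i _ => by rw [smul_dotProduct, smul_eq_mul]
      rw [e1, e2, add_zero, smul_dotProduct, smul_eq_mul, hzu_self j]
    rw [h1] at h2
    linarith

  -- Cauchy–Schwarz: |z i ⬝ᵥ u j| ≤ √(u j ⬝ᵥ u j)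
  have hCS : ∀ i j : Fin k, |z i ⬝ᵥ u j| ≤ Real.sqrt (u j ⬝ᵥ u j) := by
    intro i j
    have h1 : (z i ⬝ᵥ u j) ^ 2 ≤ (z i ⬝ᵥ z i) * (u j ⬝ᵥ u j) := by
      simpa [dotProduct, pow_two] using
        Finset.sum_mul_sq_le_sq_mul_sq Finset.univ (z i) (u j)
    have h2 : (z i ⬝ᵥ u j) ^ 2 ≤ u j ⬝ᵥ u j := by
      refine le_trans h1 ?_
      have := mul_le_mul_of_nonneg_right (hznorm i) (hS j).le
      linarith
    calc |z i ⬝ᵥ u j| = Real.sqrt ((z i ⬝ᵥ u j) ^ 2) := (Real.sqrt_sq_eq_abs _).symm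
      _ ≤ Real.sqrt (u j ⬝ᵥ u j) := Real.sqrt_le_sqrt h2
  -- single-step bound
  have step : ∀ j : Fin k, |β j| ≤ δ⁻¹ * (1 + ∑ i ∈ Finset.Ioi j, |β i|) := by
    intro j
    set S := u j ⬝ᵥ u j with hSdef
    set C := 1 + ∑ i ∈ Finset.Ioi j, |β i| with hCdef
    have hC : (0:ℝ) ≤ C := by positivity
    have hsq : (0:ℝ) < Real.sqrt S := Real.sqrt_pos.mpr (hS j)
    have hsqδ : δ ≤ Real.sqrt S := by
      rw [show δ = Real.sqrt (δ ^ 2) by rw [Real.sqrt_sq hδ.le]]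
      exact Real.sqrt_le_sqrt (hδu j)
    have habs : |β j| * S ≤ Real.sqrt S * C := by
      have t1 : |β j| * S = |β j * S| := by rw [abs_mul, abs_of_pos (hS j)]
      have t2 : |β j * S| = |wc j * Real.sqrt S - ∑ i ∈ Finset.Ioi j, β i * (z i ⬝ᵥ u j)| := by
        rw [key j]
      have t3 : |wc j * Real.sqrt S - ∑ i ∈ Finset.Ioi j, β i * (z i ⬝ᵥ u j)|
          ≤ |wc j * Real.sqrt S| + |∑ i ∈ Finset.Ioi j, β i * (z i ⬝ᵥ u j)| := by
        rw [sub_eq_add_neg]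
        exact (abs_add_le _ _).trans (by rw [abs_neg])
      have t4 : |wc j * Real.sqrt S| ≤ Real.sqrt S := by
        rw [abs_mul, abs_of_pos hsq]
        nlinarith [hwc j, abs_nonneg (wc j)]
      have t5 : |∑ i ∈ Finset.Ioi j, β i * (z i ⬝ᵥ u j)|
          ≤ (∑ i ∈ Finset.Ioi j, |β i|) * Real.sqrt S := by
        refine (Finset.abs_sum_le_sum_abs _ _).trans ?_
        rw [Finset.sum_mul]
        refine Finset.sum_le_sum fun i _ => ?_
        rw [abs_mul]
        exact mul_le_mul_of_nonneg_left (hCS i j) (abs_nonneg _)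
      have : |β j| * S ≤ Real.sqrt S + (∑ i ∈ Finset.Ioi j, |β i|) * Real.sqrt S := by
        rw [t1, t2]; linarith
      rw [hCdef]; ring_nf; ring_nf at this; linarith
    have h3 : |β j| * Real.sqrt S ≤ C := by
      nlinarith [habs, Real.mul_self_sqrt (hS j).le, hsq, abs_nonneg (β j)]
    have h4 : δ * |β j| ≤ C := by
      nlinarith [mul_le_mul_of_nonneg_right hsqδ (abs_nonneg (β j))]
    rw [inv_mul_eq_div, le_div_iff₀ hδ]
    linarith
  -- downward induction
  have hζ : (0:ℝ) < δ⁻¹ := inv_pos.mpr hδ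
  have main : ∀ n : ℕ, ∀ j : Fin k, k - 1 - (j : ℕ) < n →
      |β j| ≤ δ⁻¹ * (1 + δ⁻¹) ^ (k - 1 - (j : ℕ)) := by
    intro n
    induction n with
    | zero => intro j hj; omega
    | succ n ih =>
      intro j hj
      have hjk : (j : ℕ) < k := j.isLt
      have hsum : ∑ i ∈ Finset.Ioi j, |β i| ≤ (1 + δ⁻¹) ^ (k - 1 - (j : ℕ)) - 1 := by
        have hb : ∑ i ∈ Finset.Ioi j, |β i|
            ≤ ∑ i ∈ Finset.Ioi j, δ⁻¹ * (1 + δ⁻¹) ^ (k - 1 - (i : ℕ)) := by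
          refine Finset.sum_le_sum fun i hi => ?_
          have hji : j < i := Finset.mem_Ioi.mp hi
          have hji' : (j : ℕ) < (i : ℕ) := hji
          exact ih i (by omega)
        refine hb.trans ?_
        have hre : ∑ i ∈ Finset.Ioi j, δ⁻¹ * (1 + δ⁻¹) ^ (k - 1 - (i : ℕ))
            = ∑ m ∈ Finset.range (k - 1 - (j : ℕ)), δ⁻¹ * (1 + δ⁻¹) ^ m := by
          refine Finset.sum_nbij' (fun i => k - 1 - (i : ℕ))
            (fun m => (⟨k - 1 - m, by omega⟩ : Fin k)) ?_ ?_ ?_ ?_ ?_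
          · intro a ha
            have : j < a := Finset.mem_Ioi.mp ha
            have : (j : ℕ) < (a : ℕ) := this
            have := a.isLt
            simp only [Finset.mem_range]
            omega
          · intro m hm
            have := Finset.mem_range.mp hm
            simp only [Finset.mem_Ioi]
            rw [Fin.lt_def]
            simp only
            omega
          · intro a ha
            have : j < a := Finset.mem_Ioi.mp ha
            have : (j : ℕ) < (a : ℕ) := this
            have := a.isLt
            ext
            simp only
            omega
          · intro m hm
            have := Finset.mem_range.mp hm
            simp only
            omega
          · intro a _; rfl
        rw [hre]
        have hgeo : ∑ m ∈ Finset.range (k - 1 - (j : ℕ)), δ⁻¹ * (1 + δ⁻¹) ^ m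
            = (1 + δ⁻¹) ^ (k - 1 - (j : ℕ)) - 1 := by
          have := geom_sum_mul (x := 1 + δ⁻¹) (n := k - 1 - (j : ℕ))
          rw [← this, Finset.sum_mul]
          exact Finset.sum_congr rfl fun m _ => by ring
        rw [hgeo]
      calc |β j| ≤ δ⁻¹ * (1 + ∑ i ∈ Finset.Ioi j, |β i|) := step j
        _ ≤ δ⁻¹ * (1 + ((1 + δ⁻¹) ^ (k - 1 - (j : ℕ)) - 1)) := by
            refine mul_le_mul_of_nonneg_left ?_ hζ.le
            linarith
        _ = δ⁻¹ * (1 + δ⁻¹) ^ (k - 1 - (j : ℕ)) := by ring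
  intro j
  exact main (k - 1 - (j : ℕ) + 1) j (Nat.lt_succ_self _)
end
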